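/- arXiv:1309.6474 — 2 statements merged into one kernel-verified Lean document; each statement's English description precedes it below -/
import Mathlib

section
/- Under the public-budget BCB setting of the four-player, three-slot counterexample, in any Nash equilibrium no slot is left empty. -/
/-- The bid (or other attribute) of the player occupying rank `r` in the ordering `π`
(rank `0` is the highest bidder); `0` for out-of-range ranks. -/
noncomputable def rankVal {n : ℕ} (f : Fin n → ℝ) (π : Equiv.Perm (Fin n)) (r : ℕ) : ℝ :=
  if h : r < n then f (π ⟨r, h⟩) else 0

/-- `π` lists the players in decreasing order of their bids `b`,
breaking ties according to the fixed priority order `prio` (lower `prio` = higher priority). -/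
def IsBidOrder {n : ℕ} (b : Fin n → ℝ) (prio : Fin n → ℕ) (π : Equiv.Perm (Fin n)) : Prop :=
  ∀ r r' : Fin n, r < r' →
    b (π r) > b (π r') ∨ (b (π r) = b (π r') ∧ prio (π r) < prio (π r'))

/-- BCB: like BCP, but a player may only take a slot that he could afford were he to pay
his *own* value-bid `rb r`. -/
noncomputable def bcbAvail {k : ℕ} (θ : Fin k → ℝ) (rb rg : ℕ → ℝ) : ℕ → Finset (Fin k)
  | 0 => Finset.univ
  | r + 1 =>
    let F := (bcbAvail θ rb rg r).filter fun s => θ s * rb r ≤ rg r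
    if h : F.Nonempty then (bcbAvail θ rb rg r).erase (F.min' h) else bcbAvail θ rb rg r

/-- BCB: the slot assigned to the player of rank `r` (or `none`). -/
noncomputable def bcbSlot {k : ℕ} (θ : Fin k → ℝ) (rb rg : ℕ → ℝ) (r : ℕ) : Option (Fin k) :=
  let F := (bcbAvail θ rb rg r).filter fun s => θ s * rb r ≤ rg r
  if h : F.Nonempty then some (F.min' h) else none

/-- Utility of player `i` under BCB. -/
noncomputable def bcbUtil {n k : ℕ} (θ : Fin k → ℝ) (v B b g : Fin n → ℝ)
    (π : Equiv.Perm (Fin n)) (i : Fin n) : EReal :=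
  let r := (π.symm i : ℕ)
  let p := rankVal b π (r + 1)
  match bcbSlot θ (rankVal b π) (rankVal g π) r with
  | none => 0
  | some s => if θ s * p ≤ B i then ((θ s * (v i - p) : ℝ) : EReal) else ⊥

/-!
Every rank that receives a slot removes it from the pool of available slots, so if slot `j` is
never assigned, one of the first three ranks receives nothing. That player can bid below everybody
else: he becomes last, the ranks ahead of him are served exactly as before (he took nothing), so
`j` is still free when his turn comes and he can afford it; as the last bidder he pays `0` and
earns `θ s * v i > 0` instead of `0`, contradicting the equilibrium condition.
-/

section Avail

variable {k : ℕ} {θ : Fin k → ℝ} {rb rg rb' rg' : ℕ → ℝ} {r : ℕ}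

theorem bcbAvail_succ_of_bcbSlot_eq_none (h : bcbSlot θ rb rg r = none) :
    bcbAvail θ rb rg (r + 1) = bcbAvail θ rb rg r := by
  unfold bcbSlot at h
  rw [bcbAvail]
  split_ifs with hF
  · simp [hF] at h
  · rfl

theorem bcbAvail_succ_of_bcbSlot_eq_some {s : Fin k} (h : bcbSlot θ rb rg r = some s) :
    bcbAvail θ rb rg (r + 1) = (bcbAvail θ rb rg r).erase s ∧ s ∈ bcbAvail θ rb rg r := by
  unfold bcbSlot at h
  rw [bcbAvail]
  split_ifs with hF
  · obtain rfl := Option.some_injective _ ((dif_pos hF).symm.trans h)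
    exact ⟨rfl, (Finset.mem_filter.mp (Finset.min'_mem _ hF)).1⟩
  · simp [hF] at h

theorem mem_bcbAvail_of_forall_bcbSlot_ne {j : Fin k}
    (h : ∀ m < r, bcbSlot θ rb rg m ≠ some j) : j ∈ bcbAvail θ rb rg r := by
  induction r with
  | zero => exact Finset.mem_univ j
  | succ r ih =>
    have hj := ih fun m hm => h m (by omega)
    cases hs : bcbSlot θ rb rg r with
    | none => rwa [bcbAvail_succ_of_bcbSlot_eq_none hs]
    | some s =>
      rw [(bcbAvail_succ_of_bcbSlot_eq_some hs).1, Finset.mem_erase]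
      exact ⟨fun e => h r r.lt_succ_self (e ▸ hs), hj⟩

theorem card_bcbAvail_add_of_forall_bcbSlot_ne_none
    (h : ∀ m < r, bcbSlot θ rb rg m ≠ none) : (bcbAvail θ rb rg r).card + r = k := by
  induction r with
  | zero => simp [bcbAvail]
  | succ r ih =>
    obtain ⟨s, hs⟩ := Option.ne_none_iff_exists'.mp (h r r.lt_succ_self)
    obtain ⟨hA, hsA⟩ := bcbAvail_succ_of_bcbSlot_eq_some hs
    have hcard := ih fun m hm => h m (by omega)
    have hpos := Finset.card_pos.mpr ⟨s, hsA⟩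
    rw [hA, Finset.card_erase_of_mem hsA]
    omega

theorem exists_bcbSlot_eq_none_of_forall_bcbSlot_ne {j : Fin k}
    (h : ∀ m < k, bcbSlot θ rb rg m ≠ some j) : ∃ m < k, bcbSlot θ rb rg m = none := by
  by_contra! hall
  have hcard := card_bcbAvail_add_of_forall_bcbSlot_ne_none hall
  have hpos := Finset.card_pos.mpr ⟨j, mem_bcbAvail_of_forall_bcbSlot_ne h⟩
  omega

theorem exists_bcbSlot_eq_some_of_mem {j : Fin k} (hj : j ∈ bcbAvail θ rb rg r)
    (hafford : θ j * rb r ≤ rg r) : ∃ s, bcbSlot θ rb rg r = some s :=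
  ⟨_, dif_pos ⟨j, Finset.mem_filter.mpr ⟨hj, hafford⟩⟩⟩

theorem bcbAvail_congr (h : ∀ m < r, rb' m = rb m ∧ rg' m = rg m) :
    bcbAvail θ rb' rg' r = bcbAvail θ rb rg r := by
  induction r with
  | zero => rfl
  | succ r ih =>
    obtain ⟨hb, hg⟩ := h r r.lt_succ_self
    rw [bcbAvail.eq_2, bcbAvail.eq_2, ih fun m hm => h m (by omega), hb, hg]

/-- Deleting a rank `t` that receives no slot from the bid sequences leaves the allocation to
all other ranks unchanged. -/
theorem bcbAvail_eq_succ_of_bcbSlot_eq_none {t : ℕ} (ht : bcbSlot θ rb rg t = none)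
    (hlt : ∀ m < t, rb' m = rb m ∧ rg' m = rg m)
    (hge : ∀ m, t ≤ m → m < r → rb' m = rb (m + 1) ∧ rg' m = rg (m + 1)) (htr : t ≤ r) :
    bcbAvail θ rb' rg' r = bcbAvail θ rb rg (r + 1) := by
  induction r, htr using Nat.le_induction with
  | base => rw [bcbAvail_succ_of_bcbSlot_eq_none ht, bcbAvail_congr hlt]
  | succ r htr ih =>
    obtain ⟨hb, hg⟩ := hge r htr r.lt_succ_self
    rw [bcbAvail.eq_2, bcbAvail.eq_2, ih fun m h1 h2 => hge m h1 (by omega), hb, hg]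

end Avail

section Order

variable {n : ℕ}

theorem val_cycleIcc_last_of_ne (t : Fin (n + 1)) {x : Fin (n + 1)} (hx : x ≠ Fin.last n) :
    (Fin.cycleIcc t (Fin.last n) x : ℕ) = if x < t then (x : ℕ) else (x : ℕ) + 1 := by
  split_ifs with hxt
  · rw [Fin.cycleIcc_of_lt hxt]
  · have hxl : x < Fin.last n := lt_of_le_of_ne (Fin.le_last x) hx
    rw [Fin.cycleIcc_of_ge_of_lt (not_lt.mp hxt) hxl, Fin.val_add_one_of_lt hxl]

/-- `(Fin.cycleIcc t (Fin.last n)).trans π` is the ranking `π` with the player ranked `t` moved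
to the end. -/
theorem IsBidOrder.update_cycleIcc_last {b : Fin (n + 1) → ℝ} {prio : Fin (n + 1) → ℕ}
    {π : Equiv.Perm (Fin (n + 1))} (hπ : IsBidOrder b prio π) (t : Fin (n + 1)) {c : ℝ}
    (hc : ∀ x ≠ π t, c < b x) :
    IsBidOrder (Function.update b (π t) c) prio ((Fin.cycleIcc t (Fin.last n)).trans π) := by
  set σ := Fin.cycleIcc t (Fin.last n)
  have hσlast : σ (Fin.last n) = t := Fin.cycleIcc_of_last (Fin.le_last t)
  have hσne {x : Fin (n + 1)} (hx : x ≠ Fin.last n) : π (σ x) ≠ π t := by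
    rw [← hσlast]; exact π.injective.ne (σ.injective.ne hx)
  intro x y hxy
  have hx : x ≠ Fin.last n := (lt_of_lt_of_le hxy (Fin.le_last y)).ne
  simp only [Equiv.trans_apply, Function.update_of_ne (hσne hx)]
  by_cases hy : y = Fin.last n
  · subst hy
    rw [hσlast, Function.update_self]
    exact Or.inl (hc _ (hσne hx))
  · rw [Function.update_of_ne (hσne hy)]
    refine hπ _ _ (Fin.lt_def.mpr ?_)
    rw [val_cycleIcc_last_of_ne t hx, val_cycleIcc_last_of_ne t hy]
    have := Fin.lt_def.mp hxy
    split_ifs <;> simp only [Fin.lt_def] at * <;> omega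

theorem rankVal_cycleIcc_last_trans (f : Fin (n + 1) → ℝ) (π : Equiv.Perm (Fin (n + 1)))
    (t : Fin (n + 1)) {m : ℕ} (hm : m < n) :
    rankVal f ((Fin.cycleIcc t (Fin.last n)).trans π) m =
      rankVal f π (if m < t then m else m + 1) := by
  have hne : (⟨m, by omega⟩ : Fin (n + 1)) ≠ Fin.last n := Fin.ne_of_val_ne (by simp; omega)
  have hval := val_cycleIcc_last_of_ne t hne
  have hlt : (if m < t then m else m + 1) < n + 1 := by split_ifs <;> omega
  rw [rankVal, rankVal, dif_pos (by omega), dif_pos hlt, Equiv.trans_apply]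
  congr 2
  exact Fin.ext (hval.trans (by simp [Fin.lt_def]))

theorem rankVal_cycleIcc_last_trans_last (f : Fin (n + 1) → ℝ) (π : Equiv.Perm (Fin (n + 1)))
    (t : Fin (n + 1)) : rankVal f ((Fin.cycleIcc t (Fin.last n)).trans π) n = f (π t) := by
  rw [rankVal, dif_pos n.lt_succ_self, Equiv.trans_apply]
  exact congrArg (f ∘ π) (Fin.cycleIcc_of_last (Fin.le_last t))

theorem rankVal_update_of_ne (f : Fin n → ℝ) (π : Equiv.Perm (Fin n)) {r : Fin n} (c : ℝ)
    {m : ℕ} (hm : m ≠ r) : rankVal (Function.update f (π r) c) π m = rankVal f π m := by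
  unfold rankVal
  split_ifs with h
  · exact Function.update_of_ne (π.injective.ne (Fin.ne_of_val_ne hm)) _ _
  · rfl

theorem rankVal_of_le (f : Fin n → ℝ) (π : Equiv.Perm (Fin n)) {m : ℕ} (hm : n ≤ m) :
    rankVal f π m = 0 :=
  dif_neg (not_lt.mpr hm)

end Order

theorem exists_bcbUtil_lt_of_bcbSlot_eq_none {n k : ℕ} {θ : Fin k → ℝ}
    {v B b : Fin (n + 1) → ℝ} {prio : Fin (n + 1) → ℕ} {π : Equiv.Perm (Fin (n + 1))}
    (hθ : ∀ s, 0 < θ s) (hπ : IsBidOrder b prio π) {t : Fin (n + 1)} (hB : 0 ≤ B (π t))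
    (hv : 0 < v (π t)) (ht : bcbSlot θ (rankVal b π) (rankVal B π) t = none) {j : Fin k}
    (hj : ∀ m ≤ n, bcbSlot θ (rankVal b π) (rankVal B π) m ≠ some j) :
    ∃ (c : ℝ) (π' : Equiv.Perm (Fin (n + 1))),
      IsBidOrder (Function.update b (π t) c) prio π' ∧
      bcbUtil θ v B b B π (π t) < bcbUtil θ v B (Function.update b (π t) c) B π' (π t) := by
  obtain ⟨L, hL⟩ := Finite.bddBelow_range b
  set c := min L 0 - 1
  have hc : ∀ x, c < b x := fun x => by
    linarith [hL (Set.mem_range_self x), min_le_left L 0]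
  set π' := (Fin.cycleIcc t (Fin.last n)).trans π
  refine ⟨c, π', IsBidOrder.update_cycleIcc_last hπ t fun x _ => hc x, ?_⟩
  set b' := Function.update b (π t) c with hb'
  have hlast : π'.symm (π t) = Fin.last n := by
    rw [Equiv.symm_apply_eq, Equiv.trans_apply, Fin.cycleIcc_of_last (Fin.le_last t)]
  have hrank {m : ℕ} (hm : m < n) : rankVal b' π' m = rankVal b π (if m < t then m else m + 1) ∧
      rankVal B π' m = rankVal B π (if m < t then m else m + 1) := by
    rw [rankVal_cycleIcc_last_trans _ _ _ hm, rankVal_cycleIcc_last_trans _ _ _ hm,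
      rankVal_update_of_ne _ _ _ (by split_ifs <;> omega)]
    exact ⟨rfl, rfl⟩
  have hA : bcbAvail θ (rankVal b' π') (rankVal B π') n =
      bcbAvail θ (rankVal b π) (rankVal B π) (n + 1) :=
    bcbAvail_eq_succ_of_bcbSlot_eq_none ht
      (fun m hm => by simpa only [if_pos hm] using hrank (m := m) (by omega))
      (fun m h1 h2 => by simpa only [if_neg (not_lt.mpr h1)] using hrank h2)
      (Nat.lt_succ_iff.mp t.isLt)
  have hj' : j ∈ bcbAvail θ (rankVal b' π') (rankVal B π') n :=
    hA ▸ mem_bcbAvail_of_forall_bcbSlot_ne fun m hm => hj m (Nat.lt_succ_iff.mp hm)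
  have hafford : θ j * rankVal b' π' n ≤ rankVal B π' n := by
    rw [rankVal_cycleIcc_last_trans_last, rankVal_cycleIcc_last_trans_last, hb',
      Function.update_self]
    nlinarith [hθ j, min_le_right L 0]
  obtain ⟨s, hs⟩ := exists_bcbSlot_eq_some_of_mem hj' hafford
  have hprice : rankVal b' π' (n + 1) = 0 := rankVal_of_le _ _ le_rfl
  simp only [bcbUtil, Equiv.symm_apply_apply, ht, hlast, Fin.val_last, hs, hprice, mul_zero,
    if_pos hB, sub_zero]
  exact_mod_cast mul_pos (hθ s) hv

theorem bcb_public_budgets_nash_no_empty_slot_general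
    (θ : Fin 3 → ℝ) (B : Fin 4 → ℝ) (v : Fin 4 → ℝ)
    (hθpos : ∀ j, 0 < θ j)
    (hBpos : ∀ i, 0 < B i)
    -- all valuations exceed B 0 / θ 2:
    (hv : ∀ i, B 0 / θ 2 < v i)
    (b : Fin 4 → ℝ) (π : Equiv.Perm (Fin 4))
    (hπ : IsBidOrder b (fun i => (i : ℕ)) π)
    (hNE : ∀ (i : Fin 4) (b' : ℝ) (π' : Equiv.Perm (Fin 4)),
      IsBidOrder (Function.update b i b') (fun i => (i : ℕ)) π' →
      bcbUtil θ v B (Function.update b i b') B π' i ≤ bcbUtil θ v B b B π i) :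
    ∀ j : Fin 3, ∃ i : Fin 4,
      bcbSlot θ (rankVal b π) (rankVal B π) ((π.symm i : ℕ)) = some j := by
  intro j
  by_contra! hempty
  have hj : ∀ m < 4, bcbSlot θ (rankVal b π) (rankVal B π) m ≠ some j := fun m hm => by
    simpa using hempty (π ⟨m, hm⟩)
  obtain ⟨t, ht3, ht⟩ := exists_bcbSlot_eq_none_of_forall_bcbSlot_ne fun m hm => hj m (by omega)
  obtain ⟨c, π', hπ', hlt⟩ := exists_bcbUtil_lt_of_bcbSlot_eq_none (t := ⟨t, by omega⟩) hθpos hπ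
    (hBpos _).le ((div_pos (hBpos 0) (hθpos 2)).trans (hv _)) ht fun m hm => hj m (by omega)
  exact (hNE _ c π' hπ').not_gt hlt

/-- In the public-budget BCB counterexample setting (three slots, four players with distinct
budgets, valuations exceeding `B 0 / θ 2`, ties by budget order), in any Nash equilibrium of
the value-bids no slot is left empty: every slot is assigned to some player. -/
theorem bcb_public_budgets_nash_no_empty_slot
    (θ : Fin 3 → ℝ) (B : Fin 4 → ℝ) (v : Fin 4 → ℝ)
    (hθpos : ∀ j, 0 < θ j) (hθ : StrictAnti θ)
    (hBpos : ∀ i, 0 < B i) (hB : StrictAnti B)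
    -- the twelve values B i / θ j are ordered as in the counterexample:
    (hchain : B 3 / θ 0 < B 2 / θ 0 ∧ B 2 / θ 0 < B 1 / θ 0 ∧ B 1 / θ 0 < B 0 / θ 0 ∧
      B 0 / θ 0 < B 3 / θ 1 ∧ B 3 / θ 1 < B 2 / θ 1 ∧ B 2 / θ 1 < B 1 / θ 1 ∧
      B 1 / θ 1 < B 0 / θ 1 ∧ B 0 / θ 1 < B 3 / θ 2 ∧ B 3 / θ 2 < B 2 / θ 2 ∧
      B 2 / θ 2 < B 1 / θ 2 ∧ B 1 / θ 2 < B 0 / θ 2)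
    -- all valuations exceed B 0 / θ 2:
    (hv : ∀ i, B 0 / θ 2 < v i)
    (b : Fin 4 → ℝ) (π : Equiv.Perm (Fin 4))
    (hπ : IsBidOrder b (fun i => (i : ℕ)) π)
    (hNE : ∀ (i : Fin 4) (b' : ℝ) (π' : Equiv.Perm (Fin 4)),
      IsBidOrder (Function.update b i b') (fun i => (i : ℕ)) π' →
      bcbUtil θ v B (Function.update b i b') B π' i ≤ bcbUtil θ v B b B π i) :
    ∀ j : Fin 3, ∃ i : Fin 4,
      bcbSlot θ (rankVal b π) (rankVal B π) ((π.symm i : ℕ)) = some j :=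
  bcb_public_budgets_nash_no_empty_slot_general θ B v hθpos hBpos hv b π hπ hNE
end

section
/- Under the public-budget BCB setting of the four-player, three-slot counterexample, in any Nash equilibrium player i receives slot i for i = 1, 2, 3, and moreover the equilibrium bids satisfy B_{i+1}/θ_i ≤ b_i ≤ B_i/θ_i for i = 1, 2, 3. -/
section Abs

variable {k : ℕ} (θ : Fin k → ℝ) (rb rg : ℕ → ℝ)

lemma bcbAvail_succ (r : ℕ) : bcbAvail θ rb rg (r+1) =
    (if h : ((bcbAvail θ rb rg r).filter fun s => θ s * rb r ≤ rg r).Nonempty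
      then (bcbAvail θ rb rg r).erase (((bcbAvail θ rb rg r).filter fun s => θ s * rb r ≤ rg r).min' h)
      else bcbAvail θ rb rg r) := rfl

lemma bcbSlot_def (r : ℕ) : bcbSlot θ rb rg r =
    (if h : ((bcbAvail θ rb rg r).filter fun s => θ s * rb r ≤ rg r).Nonempty
      then some (((bcbAvail θ rb rg r).filter fun s => θ s * rb r ≤ rg r).min' h)
      else none) := rfl

lemma bcbAvail_succ_subset (r : ℕ) : bcbAvail θ rb rg (r+1) ⊆ bcbAvail θ rb rg r := by
  rw [bcbAvail_succ]
  split_ifs with h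
  · exact Finset.erase_subset _ _
  · exact subset_rfl

lemma bcbAvail_subset_of_le {r r' : ℕ} (h : r ≤ r') :
    bcbAvail θ rb rg r' ⊆ bcbAvail θ rb rg r := by
  induction r' with
  | zero => simp_all
  | succ n ih =>
    rcases Nat.lt_or_ge r (n+1) with h' | h'
    · exact (bcbAvail_succ_subset θ rb rg n).trans (ih (Nat.lt_succ_iff.mp h'))
    · have : r = n + 1 := le_antisymm h h'
      subst this; exact subset_rfl

lemma mem_bcbAvail_of_not {s : Fin k} {q : ℕ}
    (h : ∀ r < q, ¬ (θ s * rb r ≤ rg r)) : s ∈ bcbAvail θ rb rg q := by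
  induction q with
  | zero => simp [bcbAvail]
  | succ n ih =>
    have hs : s ∈ bcbAvail θ rb rg n := ih (fun r hr => h r (hr.trans (Nat.lt_succ_self n)))
    rw [bcbAvail_succ]
    split_ifs with hF
    · refine Finset.mem_erase.mpr ⟨?_, hs⟩
      intro he
      have := Finset.min'_mem _ hF
      rw [← he] at this
      exact h n (Nat.lt_succ_self n) (Finset.mem_filter.mp this).2
    · exact hs

lemma bcbSlot_some_spec {s : Fin k} {r : ℕ} (h : bcbSlot θ rb rg r = some s) :
    s ∈ bcbAvail θ rb rg r ∧ θ s * rb r ≤ rg r ∧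
      bcbAvail θ rb rg (r+1) = (bcbAvail θ rb rg r).erase s := by
  rw [bcbSlot_def] at h
  split_ifs at h with hF
  · have hs : _ = s := Option.some_injective _ h
    have := Finset.min'_mem _ hF
    rw [hs] at this
    have hm := Finset.mem_filter.mp this
    refine ⟨hm.1, hm.2, ?_⟩
    rw [bcbAvail_succ, dif_pos hF, hs]

lemma bcbSlot_none_spec {r : ℕ} (h : bcbSlot θ rb rg r = none) :
    (∀ s ∈ bcbAvail θ rb rg r, ¬ (θ s * rb r ≤ rg r)) ∧
      bcbAvail θ rb rg (r+1) = bcbAvail θ rb rg r := by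
  rw [bcbSlot_def] at h
  split_ifs at h with hF
  constructor
  · intro s hs haff
    exact hF ⟨s, Finset.mem_filter.mpr ⟨hs, haff⟩⟩
  · rw [bcbAvail_succ, dif_neg hF]

lemma bcbSlot_none_of {r : ℕ} (h : ∀ s ∈ bcbAvail θ rb rg r, ¬ (θ s * rb r ≤ rg r)) :
    bcbSlot θ rb rg r = none := by
  rw [bcbSlot_def]
  have hF : ¬ ((bcbAvail θ rb rg r).filter fun s => θ s * rb r ≤ rg r).Nonempty := by
    intro ⟨s, hs⟩
    have := Finset.mem_filter.mp hs
    exact h s this.1 this.2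
  rw [dif_neg hF]

lemma bcbSlot_isSome_of {s : Fin k} {r : ℕ} (hs : s ∈ bcbAvail θ rb rg r)
    (ha : θ s * rb r ≤ rg r) : ∃ s', bcbSlot θ rb rg r = some s' := by
  rw [bcbSlot_def]
  have hF : ((bcbAvail θ rb rg r).filter fun s => θ s * rb r ≤ rg r).Nonempty :=
    ⟨s, Finset.mem_filter.mpr ⟨hs, ha⟩⟩
  exact ⟨_, dif_pos hF⟩

lemma bcbSlot_eq_some_of {s : Fin k} {r : ℕ} (hs : s ∈ bcbAvail θ rb rg r)
    (ha : θ s * rb r ≤ rg r)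
    (hmin : ∀ s' : Fin k, s' < s → ¬ (s' ∈ bcbAvail θ rb rg r ∧ θ s' * rb r ≤ rg r)) :
    bcbSlot θ rb rg r = some s := by
  rw [bcbSlot_def]
  have hsF : s ∈ (bcbAvail θ rb rg r).filter fun s => θ s * rb r ≤ rg r :=
    Finset.mem_filter.mpr ⟨hs, ha⟩
  have hF : ((bcbAvail θ rb rg r).filter fun s => θ s * rb r ≤ rg r).Nonempty := ⟨s, hsF⟩
  rw [dif_pos hF]
  congr 1
  refine le_antisymm (Finset.min'_le _ _ hsF) (Finset.le_min' _ _ _ ?_)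
  intro y hy
  by_contra hlt
  push_neg at hlt
  have := Finset.mem_filter.mp hy
  exact hmin y hlt ⟨this.1, this.2⟩

lemma bcbSlot_le {s s' : Fin k} {r : ℕ} (h : bcbSlot θ rb rg r = some s)
    (hmem : s' ∈ bcbAvail θ rb rg r) (ha : θ s' * rb r ≤ rg r) : s ≤ s' := by
  rw [bcbSlot_def] at h
  split_ifs at h with hF
  · have hle := Finset.min'_le ((bcbAvail θ rb rg r).filter fun s => θ s * rb r ≤ rg r) s'
      (Finset.mem_filter.mpr ⟨hmem, ha⟩)
    rwa [Option.some_injective _ h] at hle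

lemma exists_slot_of_notMem_avail {s : Fin k} {q : ℕ} (h : s ∉ bcbAvail θ rb rg q) :
    ∃ r < q, bcbSlot θ rb rg r = some s := by
  induction q with
  | zero => simp [bcbAvail] at h
  | succ n ih =>
    by_cases hn : s ∈ bcbAvail θ rb rg n
    · cases hslot : bcbSlot θ rb rg n with
      | none =>
        have := (bcbSlot_none_spec θ rb rg hslot).2
        rw [this] at h
        exact absurd hn h
      | some s' =>
        have hspec := bcbSlot_some_spec θ rb rg hslot
        rw [hspec.2.2] at h
        have : s = s' := by
          by_contra hne
          exact h (Finset.mem_erase.mpr ⟨hne, hn⟩)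
        exact ⟨n, Nat.lt_succ_self n, this ▸ hslot⟩
    · obtain ⟨r, hr, hsl⟩ := ih hn
      exact ⟨r, hr.trans (Nat.lt_succ_self n), hsl⟩

lemma bcbSlot_inj {s : Fin k} {r r' : ℕ} (h : bcbSlot θ rb rg r = some s)
    (h' : bcbSlot θ rb rg r' = some s) : r = r' := by
  have key : ∀ a a' : ℕ, a < a' → bcbSlot θ rb rg a = some s → bcbSlot θ rb rg a' = some s → False := by
    intro a a' hlt ha ha'
    have hspec := bcbSlot_some_spec θ rb rg ha
    have hspec' := bcbSlot_some_spec θ rb rg ha'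
    have hsub : bcbAvail θ rb rg a' ⊆ bcbAvail θ rb rg (a+1) :=
      bcbAvail_subset_of_le θ rb rg hlt
    have : s ∈ bcbAvail θ rb rg (a+1) := hsub hspec'.1
    rw [hspec.2.2] at this
    exact (Finset.mem_erase.mp this).1 rfl
  rcases lt_trichotomy r r' with hlt | heq | hgt
  · exact (key r r' hlt h h').elim
  · exact heq
  · exact ((key r' r hgt h' h).elim : r = r')

end Abs

section Move

def moveIdx (q r0 r : ℕ) : ℕ :=
  if r = q then r0
  else if r0 ≤ q then (if r0 ≤ r ∧ r < q then r + 1 else r)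
  else (if q < r ∧ r ≤ r0 then r - 1 else r)

lemma moveIdx_lt {q r0 r n : ℕ} (hq : q < n) (hr0 : r0 < n) (hr : r < n) :
    moveIdx q r0 r < n := by
  unfold moveIdx; split_ifs <;> omega

lemma moveIdx_inv {q r0 r : ℕ} : moveIdx r0 q (moveIdx q r0 r) = r := by
  unfold moveIdx; split_ifs <;> omega

lemma moveIdx_self (q r0 : ℕ) : moveIdx q r0 q = r0 := by
  unfold moveIdx; simp

lemma moveIdx_strictMono {q r0 a a' : ℕ} (h : a < a') (ha : a ≠ q) (ha' : a' ≠ q) :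
    moveIdx q r0 a < moveIdx q r0 a' := by
  unfold moveIdx; split_ifs <;> omega

def movePerm (q r0 : Fin 4) : Equiv.Perm (Fin 4) where
  toFun r := ⟨moveIdx q r0 r, moveIdx_lt q.isLt r0.isLt r.isLt⟩
  invFun r := ⟨moveIdx r0 q r, moveIdx_lt r0.isLt q.isLt r.isLt⟩
  left_inv r := Fin.ext moveIdx_inv
  right_inv r := Fin.ext moveIdx_inv

lemma movePerm_apply (q r0 r : Fin 4) : ((movePerm q r0 r : Fin 4) : ℕ) = moveIdx q r0 r := rfl

lemma movePerm_apply_self (q r0 : Fin 4) : movePerm q r0 q = r0 :=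
  Fin.ext (moveIdx_self q r0)

end Move

section RankFacts

variable {b : Fin 4 → ℝ} {π : Equiv.Perm (Fin 4)}

lemma rankVal_lt {f : Fin 4 → ℝ} (π : Equiv.Perm (Fin 4)) {r : ℕ} (h : r < 4) :
    rankVal f π r = f (π ⟨r, h⟩) := dif_pos h

lemma rankVal_ge {f : Fin 4 → ℝ} (π : Equiv.Perm (Fin 4)) {r : ℕ} (h : ¬ (r < 4)) :
    rankVal f π r = 0 := dif_neg h

lemma bid_anti (hπ : IsBidOrder b (fun i => (i : ℕ)) π) {r r' : Fin 4} (h : r ≤ r') :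
    b (π r') ≤ b (π r) := by
  rcases eq_or_lt_of_le h with heq | hlt
  · rw [heq]
  · rcases hπ r r' hlt with h1 | h2
    · exact le_of_lt h1
    · exact le_of_eq h2.1.symm

lemma rank_lt_of_bid_gt (hπ : IsBidOrder b (fun i => (i : ℕ)) π) {i j : Fin 4}
    (h : b j < b i) : π.symm i < π.symm j := by
  by_contra hle
  push_neg at hle
  have := bid_anti hπ hle
  simp only [Equiv.apply_symm_apply] at this
  exact absurd (lt_of_lt_of_le h this) (lt_irrefl _)

end RankFacts

section Util

lemma bcbUtil_some {θ : Fin 3 → ℝ} {v B b g : Fin 4 → ℝ} {π : Equiv.Perm (Fin 4)} {i : Fin 4}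
    {r : ℕ} {s : Fin 3} (hr : (π.symm i : ℕ) = r)
    (hs : bcbSlot θ (rankVal b π) (rankVal g π) r = some s) :
    bcbUtil θ v B b g π i =
      if θ s * rankVal b π (r+1) ≤ B i
        then ((θ s * (v i - rankVal b π (r+1)) : ℝ) : EReal) else ⊥ := by
  unfold bcbUtil
  simp only [hr, hs]

lemma bcbUtil_none {θ : Fin 3 → ℝ} {v B b g : Fin 4 → ℝ} {π : Equiv.Perm (Fin 4)} {i : Fin 4}
    {r : ℕ} (hr : (π.symm i : ℕ) = r)
    (hs : bcbSlot θ (rankVal b π) (rankVal g π) r = none) :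
    bcbUtil θ v B b g π i = 0 := by
  unfold bcbUtil
  simp only [hr, hs]

end Util

section Deviation

variable {θ : Fin 3 → ℝ} {B v b : Fin 4 → ℝ} {π : Equiv.Perm (Fin 4)}

lemma grab (hθpos : ∀ j, 0 < θ j)
    (hπ : IsBidOrder b (fun i => (i : ℕ)) π)
    (i : Fin 4) (x : ℝ) (hx : 0 < x) (q : Fin 4) (s₀ : Fin 3)
    (hsplit : ∀ r : Fin 4, r ≠ π.symm i →
      ((moveIdx (π.symm i : ℕ) (q : ℕ) (r : ℕ) < (q : ℕ) ∧ x < b (π r) ∧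
          ¬ (θ s₀ * b (π r) ≤ B (π r)))
        ∨ (¬ (moveIdx (π.symm i : ℕ) (q : ℕ) (r : ℕ) < (q : ℕ)) ∧ b (π r) < x)))
    (haff : θ s₀ * x ≤ B i)
    (hnot : ∀ s' : Fin 3, s' < s₀ → ¬ (θ s' * x ≤ B i)) :
    ∃ (π' : Equiv.Perm (Fin 4)) (p : ℝ),
      IsBidOrder (Function.update b i x) (fun i => (i : ℕ)) π' ∧
      ((p = 0 ∧ (q : ℕ) = 3) ∨ (∃ j : Fin 4, j ≠ i ∧ p = b j ∧ b j < x)) ∧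
      bcbUtil θ v B (Function.update b i x) B π' i = ((θ s₀ * (v i - p) : ℝ) : EReal) := by
  classical
  set ρ : Fin 4 := π.symm i with hρ
  set e : Equiv.Perm (Fin 4) := movePerm q ρ with he
  set π' : Equiv.Perm (Fin 4) := e.trans π with hπ'
  set b' : Fin 4 → ℝ := Function.update b i x with hb'
  have happ : ∀ r : Fin 4, π' r = π (e r) := fun r => rfl
  have hπq : π' q = i := by
    rw [happ, he, movePerm_apply_self, hρ, Equiv.apply_symm_apply]
  have hsymm : π'.symm i = q := by rw [← hπq, Equiv.symm_apply_apply]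
  have hne_q : ∀ r : Fin 4, r ≠ q → e r ≠ ρ := by
    intro r hr hcon
    apply hr
    have : e r = e q := by rw [hcon, he, movePerm_apply_self]
    exact e.injective this
  have hne_i : ∀ r : Fin 4, r ≠ q → π (e r) ≠ i := by
    intro r hr hcon
    exact hne_q r hr (by rw [hρ, ← hcon, Equiv.symm_apply_apply])
  have hval : ∀ r : Fin 4, ((e r : Fin 4) : ℕ) = moveIdx (q : ℕ) (ρ : ℕ) (r : ℕ) := fun r => rfl
  have hclass : ∀ r : Fin 4, r ≠ q →
      (((r : ℕ) < (q : ℕ)) ∧ x < b (π (e r)) ∧ ¬ (θ s₀ * b (π (e r)) ≤ B (π (e r))))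
      ∨ (¬ ((r : ℕ) < (q : ℕ)) ∧ b (π (e r)) < x) := by
    intro r hr
    have h1 := hsplit (e r) (hne_q r hr)
    have h2 : moveIdx (ρ : ℕ) (q : ℕ) ((e r : Fin 4) : ℕ) = (r : ℕ) := by
      rw [hval]; exact moveIdx_inv
    rw [hρ] at h2
    rw [h2] at h1
    exact h1
  have hupd_ne : ∀ r : Fin 4, r ≠ q → b' (π' r) = b (π (e r)) := by
    intro r hr
    rw [happ, hb']
    exact Function.update_of_ne (hne_i r hr) _ _
  have hupd_q : b' (π' q) = x := by rw [hπq, hb', Function.update_self]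
  have horder : IsBidOrder b' (fun i => (i : ℕ)) π' := by
    intro a a' hlt
    have hltv : (a : ℕ) < (a' : ℕ) := hlt
    by_cases ha' : a' = q
    · have ha : a ≠ q := by rw [← ha']; exact ne_of_lt hlt
      rcases hclass a ha with ⟨_, hxb, _⟩ | ⟨hnlt, _⟩
      · left
        rw [hupd_ne a ha, ha', hupd_q]
        exact hxb
      · exfalso; apply hnlt; rw [← ha'] at *; exact hltv
    · by_cases ha : a = q
      · rcases hclass a' ha' with ⟨hlt', _, _⟩ | ⟨_, hbx⟩
        · exfalso; rw [← ha] at hlt'; omega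
        · left
          rw [hupd_ne a' ha', ha, hupd_q]
          exact hbx
      · have hmono : e a < e a' := by
          rw [Fin.lt_def, hval, hval]
          exact moveIdx_strictMono hltv (fun hc => ha (Fin.ext hc)) (fun hc => ha' (Fin.ext hc))
        have h := hπ (e a) (e a') hmono
        rw [hupd_ne a ha, hupd_ne a' ha']
        exact h
  -- slot computation
  have hrbq : rankVal b' π' (q : ℕ) = x := by
    rw [rankVal_lt π' q.isLt]
    exact hupd_q
  have hrgq : rankVal B π' (q : ℕ) = B i := by
    rw [rankVal_lt π' q.isLt]
    rw [show (⟨(q : ℕ), q.isLt⟩ : Fin 4) = q from rfl, hπq]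
  have hprefix : ∀ r : ℕ, r < (q : ℕ) →
      ¬ (θ s₀ * rankVal b' π' r ≤ rankVal B π' r) := by
    intro r hrq
    have h4 : r < 4 := lt_of_lt_of_le hrq (le_of_lt q.isLt)
    have hrfq : (⟨r, h4⟩ : Fin 4) ≠ q := by
      intro hc
      have := congrArg Fin.val hc
      simp only [Fin.val_mk] at this
      omega
    rcases hclass ⟨r, h4⟩ hrfq with ⟨_, _, hnaff⟩ | ⟨hnlt, _⟩
    · rw [rankVal_lt π' h4, rankVal_lt π' h4]
      rw [show b' (π' ⟨r, h4⟩) = b (π (e ⟨r, h4⟩)) from hupd_ne _ hrfq,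
        show π' (⟨r, h4⟩ : Fin 4) = π (e ⟨r, h4⟩) from happ _]
      exact hnaff
    · exact absurd hrq (by simpa using hnlt)
  have hmem : s₀ ∈ bcbAvail θ (rankVal b' π') (rankVal B π') (q : ℕ) :=
    mem_bcbAvail_of_not _ _ _ (fun r hr => hprefix r hr)
  have hslot : bcbSlot θ (rankVal b' π') (rankVal B π') (q : ℕ) = some s₀ := by
    apply bcbSlot_eq_some_of _ _ _ hmem
    · rw [hrbq, hrgq]; exact haff
    · intro s' hs' hcon
      rw [hrbq, hrgq] at hcon
      exact hnot s' hs' hcon.2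
  -- price
  set p : ℝ := rankVal b' π' ((q : ℕ) + 1) with hp
  have hple : (p = 0 ∧ (q : ℕ) = 3) ∨ (∃ j : Fin 4, j ≠ i ∧ p = b j ∧ b j < x) := by
    rcases Nat.lt_or_ge ((q : ℕ) + 1) 4 with h4 | h4
    · right
      have hrfq : (⟨(q : ℕ) + 1, h4⟩ : Fin 4) ≠ q := by
        intro hc
        have := congrArg Fin.val hc
        simp only [Fin.val_mk] at this
        omega
      refine ⟨π (e ⟨(q : ℕ) + 1, h4⟩), hne_i _ hrfq, ?_, ?_⟩
      · rw [hp, rankVal_lt π' h4]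
        exact hupd_ne _ hrfq
      · rcases hclass _ hrfq with ⟨hlt', _, _⟩ | ⟨_, hbx⟩
        · exfalso; simp only [Fin.val_mk] at hlt'; omega
        · exact hbx
    · left
      constructor
      · rw [hp, rankVal_ge π' (by omega)]
      · have := q.isLt; omega
  have hpx : p ≤ x := by
    rcases hple with ⟨h0, _⟩ | ⟨j, _, hpj, hjx⟩
    · rw [h0]; exact le_of_lt hx
    · rw [hpj]; exact le_of_lt hjx
  have hbudget : θ s₀ * p ≤ B i :=
    le_trans (mul_le_mul_of_nonneg_left hpx (le_of_lt (hθpos s₀))) haff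
  refine ⟨π', p, horder, hple, ?_⟩
  rw [bcbUtil_some (by rw [hsymm]) hslot, ← hp, if_pos hbudget]

lemma goNothing (hπ : IsBidOrder b (fun i => (i : ℕ)) π)
    (i : Fin 4) (x : ℝ)
    (hsplit : ∀ j : Fin 4, j ≠ i → b j < x)
    (hnone : ∀ s : Fin 3, ¬ (θ s * x ≤ B i)) :
    ∃ π' : Equiv.Perm (Fin 4),
      IsBidOrder (Function.update b i x) (fun i => (i : ℕ)) π' ∧
      bcbUtil θ v B (Function.update b i x) B π' i = 0 := by
  classical
  set ρ : Fin 4 := π.symm i with hρ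
  set e : Equiv.Perm (Fin 4) := movePerm 0 ρ with he
  set π' : Equiv.Perm (Fin 4) := e.trans π with hπ'
  set b' : Fin 4 → ℝ := Function.update b i x with hb'
  have happ : ∀ r : Fin 4, π' r = π (e r) := fun r => rfl
  have hπq : π' 0 = i := by
    rw [happ, he, movePerm_apply_self, hρ, Equiv.apply_symm_apply]
  have hsymm : π'.symm i = 0 := by rw [← hπq, Equiv.symm_apply_apply]
  have hne_i : ∀ r : Fin 4, r ≠ 0 → π' r ≠ i := by
    intro r hr hcon
    apply hr
    have : π' r = π' 0 := by rw [hcon, hπq]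
    exact π'.injective this
  have hupd_ne : ∀ r : Fin 4, r ≠ 0 → b' (π' r) = b (π' r) := by
    intro r hr
    exact Function.update_of_ne (hne_i r hr) _ _
  have hupd_q : b' (π' 0) = x := by rw [hπq, hb', Function.update_self]
  have horder : IsBidOrder b' (fun i => (i : ℕ)) π' := by
    intro a a' hlt
    have hltv : (a : ℕ) < (a' : ℕ) := hlt
    have ha' : a' ≠ 0 := by
      intro hc; rw [hc] at hltv; simp at hltv
    by_cases ha : a = 0
    · left
      rw [hupd_ne a' ha', ha, hupd_q]
      exact hsplit (π' a') (hne_i a' ha')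
    · have hmono : e a < e a' := by
        rw [Fin.lt_def]
        exact moveIdx_strictMono hltv
          (fun hc => ha (Fin.ext hc)) (fun hc => ha' (Fin.ext hc))
      have h := hπ (e a) (e a') hmono
      rw [hupd_ne a ha, hupd_ne a' ha']
      exact h
  have hrbq : rankVal b' π' 0 = x := by
    rw [rankVal_lt π' (by omega : (0:ℕ) < 4)]
    exact hupd_q
  have hrgq : rankVal B π' 0 = B i := by
    rw [rankVal_lt π' (by omega : (0:ℕ) < 4)]
    rw [show (⟨(0:ℕ), by omega⟩ : Fin 4) = (0 : Fin 4) from rfl, hπq]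
  have hslot : bcbSlot θ (rankVal b' π') (rankVal B π') 0 = none := by
    apply bcbSlot_none_of
    intro s _ hcon
    rw [hrbq, hrgq] at hcon
    exact hnone s hcon
  exact ⟨π', horder, bcbUtil_none (by rw [hsymm]; rfl) hslot⟩

end Deviation

set_option maxHeartbeats 2000000 in
/-- In the public-budget BCB counterexample setting, in any Nash equilibrium of the
value-bids, player `i` receives slot `i` for `i = 0, 1, 2`, and moreover the equilibrium
bids satisfy `B (i+1) / θ i ≤ b i ≤ B i / θ i` for `i = 0, 1, 2`. -/
theorem bcb_public_budgets_nash_allocation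
    (θ : Fin 3 → ℝ) (B : Fin 4 → ℝ) (v : Fin 4 → ℝ)
    (hθpos : ∀ j, 0 < θ j) (hθ : StrictAnti θ)
    (hBpos : ∀ i, 0 < B i) (hB : StrictAnti B)
    -- the twelve values B i / θ j are ordered as in the counterexample:
    (hchain : B 3 / θ 0 < B 2 / θ 0 ∧ B 2 / θ 0 < B 1 / θ 0 ∧ B 1 / θ 0 < B 0 / θ 0 ∧
      B 0 / θ 0 < B 3 / θ 1 ∧ B 3 / θ 1 < B 2 / θ 1 ∧ B 2 / θ 1 < B 1 / θ 1 ∧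
      B 1 / θ 1 < B 0 / θ 1 ∧ B 0 / θ 1 < B 3 / θ 2 ∧ B 3 / θ 2 < B 2 / θ 2 ∧
      B 2 / θ 2 < B 1 / θ 2 ∧ B 1 / θ 2 < B 0 / θ 2)
    -- all valuations exceed B 0 / θ 2:
    (hv : ∀ i, B 0 / θ 2 < v i)
    (b : Fin 4 → ℝ) (π : Equiv.Perm (Fin 4))
    (hπ : IsBidOrder b (fun i => (i : ℕ)) π)
    (hNE : ∀ (i : Fin 4) (b' : ℝ) (π' : Equiv.Perm (Fin 4)),
      IsBidOrder (Function.update b i b') (fun i => (i : ℕ)) π' →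
      bcbUtil θ v B (Function.update b i b') B π' i ≤ bcbUtil θ v B b B π i) :
    ∀ m : Fin 3,
      bcbSlot θ (rankVal b π) (rankVal B π) ((π.symm m.castSucc : ℕ)) = some m ∧
      B m.succ / θ m ≤ b m.castSucc ∧ b m.castSucc ≤ B m.castSucc / θ m := by
  classical
  obtain ⟨c1, c2, c3, c4, c5, c6, c7, c8, c9, c10, c11⟩ := hchain
  have hTpos : ∀ (i : Fin 4) (j : Fin 3), 0 < B i / θ j := fun i j => div_pos (hBpos i) (hθpos j)
  have haffd : ∀ (i : Fin 4) (j : Fin 3) (x : ℝ), (θ j * x ≤ B i ↔ x ≤ B i / θ j) := by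
    intro i j x; rw [mul_comm, ← le_div_iff₀ (hθpos j)]
  have hfin3 : ∀ s : Fin 3, s ≤ 2 := by intro s; omega
  have hfin4 : ∀ i : Fin 4, i ≤ 3 := by intro i; omega
  have hBle3 : ∀ i : Fin 4, B 3 ≤ B i := fun i => hB.antitone (hfin4 i)
  have hBle0 : ∀ i : Fin 4, B i ≤ B 0 := fun i => hB.antitone (Fin.zero_le i)
  have hθle2 : ∀ s : Fin 3, θ 2 ≤ θ s := fun s => hθ.antitone (hfin3 s)
  have hθle0 : ∀ s : Fin 3, θ s ≤ θ 0 := fun s => hθ.antitone (Fin.zero_le s)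
  have hdivle : ∀ (j : Fin 3) {x y : ℝ}, x ≤ y → x / θ j ≤ y / θ j := by
    intro j x y h; exact div_le_div_of_nonneg_right h (hθpos j).le
  have hband01 : ∀ i i' : Fin 4, B i / θ 0 < B i' / θ 1 := by
    intro i i'
    calc B i / θ 0 ≤ B 0 / θ 0 := hdivle 0 (hBle0 i)
      _ < B 3 / θ 1 := c4
      _ ≤ B i' / θ 1 := hdivle 1 (hBle3 i')
  have hband12 : ∀ i i' : Fin 4, B i / θ 1 < B i' / θ 2 := by
    intro i i'
    calc B i / θ 1 ≤ B 0 / θ 1 := hdivle 1 (hBle0 i)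
      _ < B 3 / θ 2 := c8
      _ ≤ B i' / θ 2 := hdivle 2 (hBle3 i')
  have hband02 : ∀ i i' : Fin 4, B i / θ 0 < B i' / θ 2 :=
    fun i i' => (hband01 i 0).trans (hband12 0 i')
  have hT02max : ∀ (i : Fin 4) (j : Fin 3), B i / θ j ≤ B 0 / θ 2 := by
    intro i j
    have h1 : B i / θ j ≤ B 0 / θ j := hdivle j (hBle0 i)
    have h2 : B 0 / θ j ≤ B 0 / θ 2 :=
      div_le_div_of_nonneg_left (hBpos 0).le (hθpos 2) (hθle2 j)
    exact h1.trans h2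
  have hnotaff : ∀ (x : ℝ) (i : Fin 4) (s : Fin 3), ¬ (θ s * x ≤ B i) → B i / θ s < x := by
    intro x i s h
    by_contra h'
    push_neg at h'
    exact h ((haffd i s x).mpr h')
  have haffmono : ∀ (x : ℝ) (i : Fin 4) (s s' : Fin 3), s ≤ s' → θ s * x ≤ B i →
      x ≤ B i / θ s' := by
    intro x i s s' hss h
    rcases le_or_gt 0 x with hx | hx
    · rw [← haffd]
      calc θ s' * x ≤ θ s * x := mul_le_mul_of_nonneg_right (hθ.antitone hss) hx
        _ ≤ B i := h
    · exact le_of_lt (lt_of_lt_of_le hx (hTpos i s').le)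
  set Rb := rankVal b π with hRbdef
  set Rg := rankVal B π with hRgdef
  have hRb : ∀ (r : ℕ) (h : r < 4), Rb r = b (π ⟨r, h⟩) := fun r h => rankVal_lt π h
  have hRg : ∀ (r : ℕ) (h : r < 4), Rg r = B (π ⟨r, h⟩) := fun r h => rankVal_lt π h
  have hRbanti : ∀ (r r' : ℕ) (h : r < 4) (h' : r' < 4), r ≤ r' → Rb r' ≤ Rb r := by
    intro r r' h h' hle
    rw [hRb r h, hRb r' h']
    exact bid_anti hπ (Fin.mk_le_mk.mpr hle)
  -- every player's equilibrium utility is nonnegative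
  have hU0 : ∀ i : Fin 4, (0 : EReal) ≤ bcbUtil θ v B b B π i := by
    intro i
    set M : ℝ := max (max (b 0) (b 1)) (max (b 2) (b 3)) with hM
    set x : ℝ := max M (B i / θ 2) + 1 with hxdef
    have hbM : ∀ j : Fin 4, b j ≤ M := by
      intro j; fin_cases j
      · exact le_max_of_le_left (le_max_left _ _)
      · exact le_max_of_le_left (le_max_right _ _)
      · exact le_max_of_le_right (le_max_left _ _)
      · exact le_max_of_le_right (le_max_right _ _)
    have hxT : B i / θ 2 < x := by
      have := le_max_right M (B i / θ 2); rw [hxdef]; linarith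
    have hsplitN : ∀ j : Fin 4, j ≠ i → b j < x := by
      intro j _
      have h1 := hbM j
      have h2 := le_max_left M (B i / θ 2)
      rw [hxdef]; linarith
    have hnoneN : ∀ s : Fin 3, ¬ (θ s * x ≤ B i) := by
      intro s hcs
      have h1 : x ≤ B i / θ s := (haffd i s x).mp hcs
      have h2 : B i / θ s ≤ B i / θ 2 :=
        div_le_div_of_nonneg_left (hBpos i).le (hθpos 2) (hθle2 s)
      linarith
    obtain ⟨π', hord, hu⟩ := goNothing hπ i x hsplitN hnoneN
    have hle := hNE i x π' hord
    rw [hu] at hle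
    exact hle
  -- a player at an unassigned rank who can profitably grab a slot: contradiction
  have hgrabcon : ∀ (r0 : ℕ) (h4 : r0 < 4),
      bcbSlot θ Rb Rg r0 = none →
      ∀ (x : ℝ), 0 < x → x ≤ B 0 / θ 2 →
      ∀ (q : Fin 4) (s₀ : Fin 3),
      (∀ r : Fin 4, r ≠ ⟨r0, h4⟩ →
        ((moveIdx r0 (q : ℕ) (r : ℕ) < (q : ℕ) ∧ x < b (π r) ∧
            ¬ (θ s₀ * b (π r) ≤ B (π r)))
          ∨ (¬ (moveIdx r0 (q : ℕ) (r : ℕ) < (q : ℕ)) ∧ b (π r) < x))) →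
      θ s₀ * x ≤ B (π ⟨r0, h4⟩) →
      (∀ s' : Fin 3, s' < s₀ → ¬ (θ s' * x ≤ B (π ⟨r0, h4⟩))) → False := by
    intro r0 h4 hnone x hx hxle q s₀ hsplit haff hnot
    set i := π ⟨r0, h4⟩ with hidef
    have hsy : π.symm i = ⟨r0, h4⟩ := by rw [hidef, Equiv.symm_apply_apply]
    have hsyv : (π.symm i : ℕ) = r0 := by rw [hsy]
    have hsplit' : ∀ r : Fin 4, r ≠ π.symm i →
        ((moveIdx (π.symm i : ℕ) (q : ℕ) (r : ℕ) < (q : ℕ) ∧ x < b (π r) ∧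
            ¬ (θ s₀ * b (π r) ≤ B (π r)))
          ∨ (¬ (moveIdx (π.symm i : ℕ) (q : ℕ) (r : ℕ) < (q : ℕ)) ∧ b (π r) < x)) := by
      intro r hr
      rw [hsyv]
      exact hsplit r (by rw [← hsy]; exact hr)
    obtain ⟨π', p, hord, hple, hu⟩ := grab hθpos hπ i x hx q s₀ hsplit' haff hnot
    have hueq : bcbUtil θ v B b B π i = 0 := bcbUtil_none hsyv hnone
    have hle := hNE i x π' hord
    rw [hu, hueq] at hle
    have hpx : p ≤ x := by
      rcases hple with ⟨h0, _⟩ | ⟨j, _, hpj, hjx⟩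
      · rw [h0]; exact hx.le
      · rw [hpj]; exact hjx.le
    have hvp : 0 < v i - p := by have := hv i; linarith
    have hpos : 0 < θ s₀ * (v i - p) := mul_pos (hθpos s₀) hvp
    have hlt : (0 : EReal) < ((θ s₀ * (v i - p) : ℝ) : EReal) := by exact_mod_cast hpos
    exact absurd hle (not_le.mpr hlt)
  -- ######## slot 2 is assigned ########
  have hS2 : ∃ (r : ℕ) (h4 : r < 4), bcbSlot θ Rb Rg r = some 2 := by
    by_contra hcon
    push_neg at hcon
    have hcon' : ∀ (r : ℕ), r < 4 → bcbSlot θ Rb Rg r ≠ some 2 := fun r h4 => hcon r h4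
    have h2mem : ∀ r : ℕ, r ≤ 4 → (2 : Fin 3) ∈ bcbAvail θ Rb Rg r := by
      intro r hr
      by_contra hmem
      obtain ⟨r', hr', hsl⟩ := exists_slot_of_notMem_avail θ Rb Rg hmem
      exact hcon' r' (by omega) hsl
    have hdich : ∀ (r : ℕ) (h4 : r < 4), (¬ (θ 2 * Rb r ≤ Rg r)) ∨
        (Rb r ≤ B (π ⟨r, h4⟩) / θ 1 ∧ ∃ s : Fin 3, s ≠ 2 ∧ bcbSlot θ Rb Rg r = some s) := by
      intro r h4
      by_cases haf : θ 2 * Rb r ≤ Rg r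
      · right
        obtain ⟨s, hs⟩ := bcbSlot_isSome_of θ Rb Rg (h2mem r (by omega)) haf
        have hss := bcbSlot_some_spec θ Rb Rg hs
        have hs2 : s ≠ 2 := fun hc => hcon' r h4 (hc ▸ hs)
        have hsle : s ≤ 1 := by omega
        have haf' : θ s * Rb r ≤ B (π ⟨r, h4⟩) := by rw [← hRg r h4]; exact hss.2.1
        exact ⟨haffmono _ _ _ _ hsle haf', s, hs2, hs⟩
      · left; exact haf
    have haff2 : ∀ (r r' : ℕ) (h4 : r < 4) (h4' : r' < 4), r ≤ r' →
        Rb r ≤ B (π ⟨r, h4⟩) / θ 1 → θ 2 * Rb r' ≤ Rg r' := by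
      intro r r' h4 h4' hle hbd
      rw [hRg r' h4']
      refine (haffd _ 2 _).mpr ?_
      calc Rb r' ≤ Rb r := hRbanti r r' h4 h4' hle
        _ ≤ B (π ⟨r, h4⟩) / θ 1 := hbd
        _ ≤ B 0 / θ 1 := hdivle 1 (hBle0 _)
        _ ≤ B (π ⟨r', h4'⟩) / θ 2 := (lt_of_lt_of_le c8 (hdivle 2 (hBle3 _))).le
    rcases hdich 0 (by omega) with hH0 | ⟨hb0, s0, hs0ne, hsl0⟩
    swap
    · -- rank 0 affords slot 1: everyone affords slot 2, all ranks assigned: pigeonhole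
      have hall : ∀ (r : ℕ) (h4 : r < 4), ∃ s, bcbSlot θ Rb Rg r = some s := by
        intro r h4
        exact bcbSlot_isSome_of θ Rb Rg (h2mem r (by omega))
          (haff2 0 r (by omega) h4 (by omega) hb0)
      obtain ⟨t0, ht0⟩ := hall 0 (by omega)
      obtain ⟨t1, ht1⟩ := hall 1 (by omega)
      obtain ⟨t2, ht2⟩ := hall 2 (by omega)
      obtain ⟨t3, ht3⟩ := hall 3 (by omega)
      have hnes : ∀ (a a' : ℕ) (sa sa' : Fin 3), a ≠ a' → bcbSlot θ Rb Rg a = some sa →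
          bcbSlot θ Rb Rg a' = some sa' → sa ≠ sa' := by
        intro a a' sa sa' hne ha ha' hc
        exact hne (bcbSlot_inj θ Rb Rg ha (hc ▸ ha'))
      have d01 := hnes 0 1 t0 t1 (by omega) ht0 ht1
      have d02 := hnes 0 2 t0 t2 (by omega) ht0 ht2
      have d03 := hnes 0 3 t0 t3 (by omega) ht0 ht3
      have d12 := hnes 1 2 t1 t2 (by omega) ht1 ht2
      have d13 := hnes 1 3 t1 t3 (by omega) ht1 ht3
      have d23 := hnes 2 3 t2 t3 (by omega) ht2 ht3
      omega
    -- rank 0 is unassigned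
    have hH0' : B (π ⟨0, by omega⟩) / θ 2 < Rb 0 := by
      apply hnotaff
      rw [← hRg 0 (by omega)]
      exact hH0
    have hRb0pos : 0 < Rb 0 := (hTpos _ 2).trans hH0'
    have hnone0 : bcbSlot θ Rb Rg 0 = none := by
      apply bcbSlot_none_of
      intro s _ hcs
      apply hH0
      calc θ 2 * Rb 0 ≤ θ s * Rb 0 := mul_le_mul_of_nonneg_right (hθle2 s) hRb0pos.le
        _ ≤ Rg 0 := hcs
    set x : ℝ := (B 0 / θ 1 + B 3 / θ 2) / 2 with hxdef
    have hx1 : B 0 / θ 1 < x := by rw [hxdef]; linarith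
    have hx2 : x < B 3 / θ 2 := by rw [hxdef]; linarith
    have hxpos : 0 < x := (hTpos 0 1).trans hx1
    have hxle : x ≤ B 0 / θ 2 := (hx2.trans_le (hdivle 2 (hBle3 0))).le
    -- H-rank properties
    have hHprop : ∀ (r : ℕ) (h4 : r < 4), ¬ (θ 2 * Rb r ≤ Rg r) →
        x < b (π ⟨r, h4⟩) ∧ ¬ (θ 2 * b (π ⟨r, h4⟩) ≤ B (π ⟨r, h4⟩)) := by
      intro r h4 hH
      have h1 : B (π ⟨r, h4⟩) / θ 2 < Rb r := by
        apply hnotaff; rw [← hRg r h4]; exact hH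
      have h2 : x < Rb r := lt_of_le_of_lt (hx2.le.trans (hdivle 2 (hBle3 _))) h1
      constructor
      · rw [← hRb r h4]; exact h2
      · rw [← hRb r h4, ← hRg r h4]; exact hH
    have hTprop : ∀ (r : ℕ) (h4 : r < 4), Rb r ≤ B (π ⟨r, h4⟩) / θ 1 →
        b (π ⟨r, h4⟩) < x := by
      intro r h4 hbd
      rw [← hRb r h4]
      exact lt_of_le_of_lt (hbd.trans (hdivle 1 (hBle0 _))) hx1
    have haffX : θ 2 * x ≤ B (π ⟨0, by omega⟩) := by
      refine (haffd _ 2 _).mpr (hx2.le.trans (hdivle 2 (hBle3 _)))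
    have hnotX : ∀ s' : Fin 3, s' < 2 → ¬ (θ s' * x ≤ B (π ⟨0, by omega⟩)) := by
      intro s' hs' hcs
      have h1 : x ≤ B (π ⟨0, by omega⟩) / θ 1 := haffmono _ _ s' 1 (by omega) hcs
      have h2 : B (π ⟨0, by omega⟩) / θ 1 ≤ B 0 / θ 1 := hdivle 1 (hBle0 _)
      linarith
    rcases hdich 1 (by omega) with hH1 | ⟨hbT1, _, _, hsl1⟩
    · rcases hdich 2 (by omega) with hH2 | ⟨hbT2, _, _, hsl2⟩
      · rcases hdich 3 (by omega) with hH3 | ⟨hbT3, _, _, hsl3⟩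
        · -- q = 3 : all of ranks 1,2,3 are high
          apply hgrabcon 0 (by omega) hnone0 x hxpos hxle 3 2 ?_ haffX hnotX
          intro r hr
          fin_cases r
          · exact absurd rfl hr
          · exact Or.inl ⟨by decide, (hHprop 1 (by omega) hH1).1, (hHprop 1 (by omega) hH1).2⟩
          · exact Or.inl ⟨by decide, (hHprop 2 (by omega) hH2).1, (hHprop 2 (by omega) hH2).2⟩
          · exact Or.inl ⟨by decide, (hHprop 3 (by omega) hH3).1, (hHprop 3 (by omega) hH3).2⟩
        · -- q = 2 : ranks 1,2 high, rank 3 low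
          apply hgrabcon 0 (by omega) hnone0 x hxpos hxle 2 2 ?_ haffX hnotX
          intro r hr
          fin_cases r
          · exact absurd rfl hr
          · exact Or.inl ⟨by decide, (hHprop 1 (by omega) hH1).1, (hHprop 1 (by omega) hH1).2⟩
          · exact Or.inl ⟨by decide, (hHprop 2 (by omega) hH2).1, (hHprop 2 (by omega) hH2).2⟩
          · exact Or.inr ⟨by decide, hTprop 3 (by omega) hbT3⟩
      · -- q = 1 : rank 1 high, ranks 2,3 low
        apply hgrabcon 0 (by omega) hnone0 x hxpos hxle 1 2 ?_ haffX hnotX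
        have hb3 : b (π ⟨3, by omega⟩) < x := by
          rw [← hRb 3 (by omega)]
          exact lt_of_le_of_lt (hRbanti 2 3 (by omega) (by omega) (by omega))
            (by rw [hRb 2 (by omega)] at hbT2 ⊢; exact hTprop 2 (by omega) (by rw [hRb 2 (by omega)]; exact hbT2))
        intro r hr
        fin_cases r
        · exact absurd rfl hr
        · exact Or.inl ⟨by decide, (hHprop 1 (by omega) hH1).1, (hHprop 1 (by omega) hH1).2⟩
        · exact Or.inr ⟨by decide, hTprop 2 (by omega) hbT2⟩
        · exact Or.inr ⟨by decide, hb3⟩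
    · -- rank 1 affords slot 1: ranks 1,2,3 all assigned with slots in {0,1}: pigeonhole
      have hall : ∀ (r : ℕ), 1 ≤ r → ∀ (h4 : r < 4), ∃ s, bcbSlot θ Rb Rg r = some s := by
        intro r h1r h4
        exact bcbSlot_isSome_of θ Rb Rg (h2mem r (by omega))
          (haff2 1 r (by omega) h4 (by omega) hbT1)
      obtain ⟨t1, ht1⟩ := hall 1 (by omega) (by omega)
      obtain ⟨t2, ht2⟩ := hall 2 (by omega) (by omega)
      obtain ⟨t3, ht3⟩ := hall 3 (by omega) (by omega)
      have hnes : ∀ (a a' : ℕ) (sa sa' : Fin 3), a ≠ a' → bcbSlot θ Rb Rg a = some sa →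
          bcbSlot θ Rb Rg a' = some sa' → sa ≠ sa' := by
        intro a a' sa sa' hne ha ha' hc
        exact hne (bcbSlot_inj θ Rb Rg ha (hc ▸ ha'))
      have d12 := hnes 1 2 t1 t2 (by omega) ht1 ht2
      have d13 := hnes 1 3 t1 t3 (by omega) ht1 ht3
      have d23 := hnes 2 3 t2 t3 (by omega) ht2 ht3
      have e1 : t1 ≠ 2 := fun hc => hcon' 1 (by omega) (hc ▸ ht1)
      have e2 : t2 ≠ 2 := fun hc => hcon' 2 (by omega) (hc ▸ ht2)
      have e3 : t3 ≠ 2 := fun hc => hcon' 3 (by omega) (hc ▸ ht3)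
      omega
  -- ######## slot 1 is assigned ########
  have hS1 : ∃ (r : ℕ) (h4 : r < 4), bcbSlot θ Rb Rg r = some 1 := by
    by_contra hcon
    push_neg at hcon
    have hcon' : ∀ (r : ℕ), r < 4 → bcbSlot θ Rb Rg r ≠ some 1 := fun r h4 => hcon r h4
    have h1mem : ∀ r : ℕ, r ≤ 4 → (1 : Fin 3) ∈ bcbAvail θ Rb Rg r := by
      intro r hr
      by_contra hmem
      obtain ⟨r', hr', hsl⟩ := exists_slot_of_notMem_avail θ Rb Rg hmem
      exact hcon' r' (by omega) hsl
    have hdich : ∀ (r : ℕ) (h4 : r < 4), (¬ (θ 1 * Rb r ≤ Rg r)) ∨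
        (bcbSlot θ Rb Rg r = some 0 ∧ Rb r ≤ B (π ⟨r, h4⟩) / θ 0) := by
      intro r h4
      by_cases haf : θ 1 * Rb r ≤ Rg r
      · right
        obtain ⟨s, hs⟩ := bcbSlot_isSome_of θ Rb Rg (h1mem r (by omega)) haf
        have hsle : s ≤ 1 := bcbSlot_le θ Rb Rg hs (h1mem r (by omega)) haf
        have hs1 : s ≠ 1 := fun hc => hcon' r h4 (hc ▸ hs)
        have hs0 : s = 0 := by omega
        subst hs0
        have hss := bcbSlot_some_spec θ Rb Rg hs
        have haf' : θ 0 * Rb r ≤ B (π ⟨r, h4⟩) := by rw [← hRg r h4]; exact hss.2.1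
        exact ⟨hs, haffmono _ _ 0 0 le_rfl haf'⟩
      · left; exact haf
    obtain ⟨r2, h42, hr2⟩ := hS2
    set x : ℝ := (B 0 / θ 0 + B 3 / θ 1) / 2 with hxdef
    have hx1 : B 0 / θ 0 < x := by rw [hxdef]; linarith
    have hx2 : x < B 3 / θ 1 := by rw [hxdef]; linarith
    have hxpos : 0 < x := (hTpos 0 0).trans hx1
    have hxle : x ≤ B 0 / θ 2 := (hx2.trans (hband12 3 0)).le
    have hHprop : ∀ (r : ℕ) (h4 : r < 4), ¬ (θ 1 * Rb r ≤ Rg r) →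
        x < b (π ⟨r, h4⟩) ∧ ¬ (θ 1 * b (π ⟨r, h4⟩) ≤ B (π ⟨r, h4⟩)) := by
      intro r h4 hH
      have h1 : B (π ⟨r, h4⟩) / θ 1 < Rb r := by
        apply hnotaff; rw [← hRg r h4]; exact hH
      have h2 : x < Rb r := lt_of_le_of_lt (hx2.le.trans (hdivle 1 (hBle3 _))) h1
      constructor
      · rw [← hRb r h4]; exact h2
      · rw [← hRb r h4, ← hRg r h4]; exact hH
    by_cases hZ : ∃ (rz : ℕ) (hz4 : rz < 4), bcbSlot θ Rb Rg rz = some 0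
    · obtain ⟨rz, hz4, hz⟩ := hZ
      have hznot1 : ∀ (r : ℕ) (h4 : r < 4), r ≠ rz → ¬ (θ 1 * Rb r ≤ Rg r) := by
        intro r h4 hne
        rcases hdich r h4 with h | ⟨hs0, _⟩
        · exact h
        · exact absurd (bcbSlot_inj θ Rb Rg hs0 hz) hne
      have hzbound : Rb rz ≤ B (π ⟨rz, hz4⟩) / θ 0 := by
        have hss := bcbSlot_some_spec θ Rb Rg hz
        have haf' : θ 0 * Rb rz ≤ B (π ⟨rz, hz4⟩) := by rw [← hRg rz hz4]; exact hss.2.1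
        exact haffmono _ _ 0 0 le_rfl haf'
      have hz3 : rz = 3 := by
        by_contra hzne
        have hH3 := hznot1 3 (by omega) (by omega)
        have h1 : B (π ⟨3, by omega⟩) / θ 1 < Rb 3 := by
          apply hnotaff; rw [← hRg 3 (by omega)]; exact hH3
        have h2 : Rb 3 ≤ Rb rz := hRbanti rz 3 hz4 (by omega) (by omega)
        have h3 : B (π ⟨rz, hz4⟩) / θ 0 ≤ B 0 / θ 0 := hdivle 0 (hBle0 _)
        have h4' : B 3 / θ 1 ≤ B (π ⟨3, by omega⟩) / θ 1 := hdivle 1 (hBle3 _)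
        linarith [c4]
      have hr2ne3 : r2 ≠ 3 := by
        intro hc
        rw [hz3] at hz
        rw [hc] at hr2
        rw [hr2] at hz
        simp at hz
      set r0 : ℕ := if r2 = 0 then 1 else 0 with hr0def
      have hr0facts : r0 < 4 ∧ r0 ≠ r2 ∧ r0 ≠ 3 ∧ r0 ≤ 1 := by
        rw [hr0def]; split_ifs with h <;> omega
      obtain ⟨h40, hner2, hne3, hle1⟩ := hr0facts
      have hnone0 : bcbSlot θ Rb Rg r0 = none := by
        cases hsl : bcbSlot θ Rb Rg r0 with
        | none => rfl
        | some s =>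
          exfalso
          have hs3 : s = 0 ∨ s = 1 ∨ s = 2 := by omega
          rcases hs3 with h | h | h
          · rw [h] at hsl
            exact hne3 ((bcbSlot_inj θ Rb Rg hsl hz).trans hz3)
          · rw [h] at hsl
            exact hcon' r0 h40 hsl
          · rw [h] at hsl
            exact hner2 (bcbSlot_inj θ Rb Rg hsl hr2)
      have hb3x : b (π ⟨3, by omega⟩) < x := by
        rw [← hRb 3 (by omega)]
        have h2 : Rb 3 ≤ B (π ⟨rz, hz4⟩) / θ 0 := by
          have := hRbanti rz 3 hz4 (by omega) (by omega)
          linarith [hzbound]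
        have h3 : B (π ⟨rz, hz4⟩) / θ 0 ≤ B 0 / θ 0 := hdivle 0 (hBle0 _)
        linarith
      apply hgrabcon r0 h40 hnone0 x hxpos hxle 2 1 ?_ ?_ ?_
      · intro r hr
        have hrv : (r : ℕ) ≠ r0 := fun hc => hr (Fin.ext hc)
        by_cases hr3 : (r : ℕ) = 3
        · refine Or.inr ⟨by unfold moveIdx; split_ifs <;> omega, ?_⟩
          have : r = (⟨3, by omega⟩ : Fin 4) := Fin.ext hr3
          rw [this]; exact hb3x
        · have hH := hznot1 (r : ℕ) r.isLt (by omega)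
          have := hHprop (r : ℕ) r.isLt hH
          refine Or.inl ⟨by unfold moveIdx; split_ifs <;> omega, ?_, ?_⟩
          · have heq : (⟨(r : ℕ), r.isLt⟩ : Fin 4) = r := Fin.ext rfl
            rw [heq] at this; exact this.1
          · have heq : (⟨(r : ℕ), r.isLt⟩ : Fin 4) = r := Fin.ext rfl
            rw [heq] at this; exact this.2
      · exact (haffd _ 1 _).mpr (hx2.le.trans (hdivle 1 (hBle3 _)))
      · intro s' hs' hcs
        have hs0 : s' = 0 := by omega
        rw [hs0] at hcs
        have h1 : x ≤ B (π ⟨r0, h40⟩) / θ 0 := haffmono _ _ 0 0 le_rfl hcs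
        have h2 : B (π ⟨r0, h40⟩) / θ 0 ≤ B 0 / θ 0 := hdivle 0 (hBle0 _)
        linarith
    · -- no slot-0 winner: all ranks are 1-high
      have hH1all : ∀ (r : ℕ) (h4 : r < 4), ¬ (θ 1 * Rb r ≤ Rg r) := by
        intro r h4
        rcases hdich r h4 with h | ⟨hs0, _⟩
        · exact h
        · exact absurd ⟨r, h4, hs0⟩ hZ
      set r0 : ℕ := if r2 = 0 then 1 else 0 with hr0def
      have hr0facts : r0 < 4 ∧ r0 ≠ r2 ∧ r0 ≤ 1 := by
        rw [hr0def]; split_ifs with h <;> omega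
      obtain ⟨h40, hner2, hle1⟩ := hr0facts
      have hnone0 : bcbSlot θ Rb Rg r0 = none := by
        cases hsl : bcbSlot θ Rb Rg r0 with
        | none => rfl
        | some s =>
          exfalso
          have hs3 : s = 0 ∨ s = 1 ∨ s = 2 := by omega
          rcases hs3 with h | h | h
          · rw [h] at hsl; exact hZ ⟨r0, h40, hsl⟩
          · rw [h] at hsl; exact hcon' r0 h40 hsl
          · rw [h] at hsl; exact hner2 (bcbSlot_inj θ Rb Rg hsl hr2)
      apply hgrabcon r0 h40 hnone0 x hxpos hxle 3 1 ?_ ?_ ?_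
      · intro r hr
        have hrv : (r : ℕ) ≠ r0 := fun hc => hr (Fin.ext hc)
        have hH := hH1all (r : ℕ) r.isLt
        have := hHprop (r : ℕ) r.isLt hH
        have heq : (⟨(r : ℕ), r.isLt⟩ : Fin 4) = r := Fin.ext rfl
        rw [heq] at this
        refine Or.inl ⟨by unfold moveIdx; split_ifs <;> omega, this.1, this.2⟩
      · exact (haffd _ 1 _).mpr (hx2.le.trans (hdivle 1 (hBle3 _)))
      · intro s' hs' hcs
        have hs0 : s' = 0 := by omega
        rw [hs0] at hcs
        have h1 : x ≤ B (π ⟨r0, h40⟩) / θ 0 := haffmono _ _ 0 0 le_rfl hcs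
        have h2 : B (π ⟨r0, h40⟩) / θ 0 ≤ B 0 / θ 0 := hdivle 0 (hBle0 _)
        linarith
  -- ######## slot 0 is assigned ########
  have hS0 : ∃ (r : ℕ) (h4 : r < 4), bcbSlot θ Rb Rg r = some 0 := by
    by_contra hcon
    push_neg at hcon
    have hcon' : ∀ (r : ℕ), r < 4 → bcbSlot θ Rb Rg r ≠ some 0 := fun r h4 => hcon r h4
    have h0mem : ∀ r : ℕ, r ≤ 4 → (0 : Fin 3) ∈ bcbAvail θ Rb Rg r := by
      intro r hr
      by_contra hmem
      obtain ⟨r', hr', hsl⟩ := exists_slot_of_notMem_avail θ Rb Rg hmem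
      exact hcon' r' (by omega) hsl
    have hH0all : ∀ (r : ℕ) (h4 : r < 4), ¬ (θ 0 * Rb r ≤ Rg r) := by
      intro r h4 haf
      obtain ⟨s, hs⟩ := bcbSlot_isSome_of θ Rb Rg (h0mem r (by omega)) haf
      have hsle : s ≤ 0 := bcbSlot_le θ Rb Rg hs (h0mem r (by omega)) haf
      have hs0 : s = 0 := by omega
      exact hcon' r h4 (hs0 ▸ hs)
    obtain ⟨r2, h42, hr2⟩ := hS2
    obtain ⟨r1, h41, hr1⟩ := hS1
    have hr12 : r1 ≠ r2 := by
      intro hc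
      rw [hc, hr2] at hr1
      simp at hr1
    set r0 : ℕ := if r1 ≠ 0 ∧ r2 ≠ 0 then 0 else if r1 ≠ 1 ∧ r2 ≠ 1 then 1 else 2 with hr0def
    have hr0facts : r0 < 4 ∧ r0 ≠ r1 ∧ r0 ≠ r2 := by
      rw [hr0def]; split_ifs <;> omega
    obtain ⟨h40, hner1, hner2⟩ := hr0facts
    have hnone0 : bcbSlot θ Rb Rg r0 = none := by
      cases hsl : bcbSlot θ Rb Rg r0 with
      | none => rfl
      | some s =>
        exfalso
        have hs3 : s = 0 ∨ s = 1 ∨ s = 2 := by omega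
        rcases hs3 with h | h | h
        · rw [h] at hsl; exact hcon' r0 h40 hsl
        · rw [h] at hsl; exact hner1 (bcbSlot_inj θ Rb Rg hsl hr1)
        · rw [h] at hsl; exact hner2 (bcbSlot_inj θ Rb Rg hsl hr2)
    set x : ℝ := B 3 / θ 0 / 2 with hxdef
    have hxpos : 0 < x := by have := hTpos 3 0; rw [hxdef]; linarith
    have hx2 : x < B 3 / θ 0 := by
      rw [hxdef]; have := hTpos 3 0; linarith
    have hxle : x ≤ B 0 / θ 2 := (hx2.trans (hband02 3 0)).le
    apply hgrabcon r0 h40 hnone0 x hxpos hxle 3 0 ?_ ?_ ?_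
    · intro r hr
      have hrv : (r : ℕ) ≠ r0 := fun hc => hr (Fin.ext hc)
      have hH := hH0all (r : ℕ) r.isLt
      have h1 : B (π ⟨(r : ℕ), r.isLt⟩) / θ 0 < Rb (r : ℕ) := by
        apply hnotaff; rw [← hRg _ r.isLt]; exact hH
      have heq : (⟨(r : ℕ), r.isLt⟩ : Fin 4) = r := Fin.ext rfl
      refine Or.inl ⟨by unfold moveIdx; split_ifs <;> omega, ?_, ?_⟩
      · have h2 : B 3 / θ 0 ≤ B (π ⟨(r : ℕ), r.isLt⟩) / θ 0 := hdivle 0 (hBle3 _)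
        rw [← heq, ← hRb _ r.isLt]
        linarith
      · rw [← heq, ← hRb _ r.isLt, ← hRg _ r.isLt]; exact hH
    · refine (haffd _ 0 _).mpr (hx2.le.trans (hdivle 0 (hBle3 _)))
    · intro s' hs'
      exact absurd hs' (by omega)
  -- ######## winners and loser ########
  obtain ⟨r2s, h42, hw2s⟩ := hS2
  obtain ⟨r1s, h41, hw1s⟩ := hS1
  obtain ⟨r0s, h40, hw0s⟩ := hS0
  have hd01 : r0s ≠ r1s := by
    intro hc; rw [hc] at hw0s; rw [hw0s] at hw1s; simp at hw1s
  have hd02 : r0s ≠ r2s := by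
    intro hc; rw [hc] at hw0s; rw [hw0s] at hw2s; simp at hw2s
  have hd12 : r1s ≠ r2s := by
    intro hc; rw [hc] at hw1s; rw [hw1s] at hw2s; simp at hw2s
  set rLs : ℕ := if r0s ≠ 0 ∧ r1s ≠ 0 ∧ r2s ≠ 0 then 0
    else if r0s ≠ 1 ∧ r1s ≠ 1 ∧ r2s ≠ 1 then 1
    else if r0s ≠ 2 ∧ r1s ≠ 2 ∧ r2s ≠ 2 then 2 else 3 with hrLdef
  have hrLfacts : rLs < 4 ∧ rLs ≠ r0s ∧ rLs ≠ r1s ∧ rLs ≠ r2s := by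
    rw [hrLdef]; split_ifs <;> omega
  obtain ⟨hL4, hLne0, hLne1, hLne2⟩ := hrLfacts
  have hLnone : bcbSlot θ Rb Rg rLs = none := by
    cases hsl : bcbSlot θ Rb Rg rLs with
    | none => rfl
    | some s =>
      exfalso
      have hs3 : s = 0 ∨ s = 1 ∨ s = 2 := by omega
      rcases hs3 with h | h | h
      · rw [h] at hsl; exact hLne0 (bcbSlot_inj θ Rb Rg hsl hw0s)
      · rw [h] at hsl; exact hLne1 (bcbSlot_inj θ Rb Rg hsl hw1s)
      · rw [h] at hsl; exact hLne2 (bcbSlot_inj θ Rb Rg hsl hw2s)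
  set w0 : Fin 4 := π ⟨r0s, h40⟩ with hw0def
  set w1 : Fin 4 := π ⟨r1s, h41⟩ with hw1def
  set w2 : Fin 4 := π ⟨r2s, h42⟩ with hw2def
  set L : Fin 4 := π ⟨rLs, hL4⟩ with hLdef
  have hsy0 : π.symm w0 = ⟨r0s, h40⟩ := by rw [hw0def, Equiv.symm_apply_apply]
  have hsy1 : π.symm w1 = ⟨r1s, h41⟩ := by rw [hw1def, Equiv.symm_apply_apply]
  have hsy2 : π.symm w2 = ⟨r2s, h42⟩ := by rw [hw2def, Equiv.symm_apply_apply]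
  have hsyL : π.symm L = ⟨rLs, hL4⟩ := by rw [hLdef, Equiv.symm_apply_apply]
  have hsv0 : ((π.symm w0 : Fin 4) : ℕ) = r0s := by rw [hsy0]
  have hsv1 : ((π.symm w1 : Fin 4) : ℕ) = r1s := by rw [hsy1]
  have hsv2 : ((π.symm w2 : Fin 4) : ℕ) = r2s := by rw [hsy2]
  have hsvL : ((π.symm L : Fin 4) : ℕ) = rLs := by rw [hsyL]
  have hpart : ∀ j : Fin 4, j = w0 ∨ j = w1 ∨ j = w2 ∨ j = L := by
    intro j
    have hjr : π (π.symm j) = j := Equiv.apply_symm_apply π j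
    have hv4 : ((π.symm j : Fin 4) : ℕ) < 4 := (π.symm j).isLt
    have hcases : ((π.symm j : Fin 4) : ℕ) = r0s ∨ ((π.symm j : Fin 4) : ℕ) = r1s ∨
        ((π.symm j : Fin 4) : ℕ) = r2s ∨ ((π.symm j : Fin 4) : ℕ) = rLs := by omega
    rcases hcases with h | h | h | h
    · left; rw [← hjr, hw0def]; congr 1; exact Fin.ext h
    · right; left; rw [← hjr, hw1def]; congr 1; exact Fin.ext h
    · right; right; left; rw [← hjr, hw2def]; congr 1; exact Fin.ext h
    · right; right; right; rw [← hjr, hLdef]; congr 1; exact Fin.ext h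
  -- equilibrium utilities of the winners
  have hbotlt : (⊥ : EReal) < 0 := EReal.coe_zero ▸ EReal.bot_lt_coe 0
  have hu_of : ∀ (i : Fin 4) (rr : ℕ) (h4 : rr < 4) (s : Fin 3), π.symm i = ⟨rr, h4⟩ →
      bcbSlot θ Rb Rg rr = some s →
      θ s * Rb (rr+1) ≤ B i ∧
      bcbUtil θ v B b B π i = ((θ s * (v i - Rb (rr+1)) : ℝ) : EReal) ∧
      Rb (rr+1) ≤ v i := by
    intro i rr h4 s hsy hsl
    have hU := hU0 i
    have heq := bcbUtil_some (θ := θ) (v := v) (B := B) (b := b) (g := B) (π := π)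
      (i := i) (r := rr) (s := s) (by rw [hsy]) hsl
    by_cases hbud : θ s * Rb (rr+1) ≤ B i
    · rw [if_pos hbud] at heq
      refine ⟨hbud, heq, ?_⟩
      rw [heq] at hU
      have hr : (0:ℝ) ≤ θ s * (v i - Rb (rr+1)) := by exact_mod_cast hU
      by_contra hlt
      push_neg at hlt
      have : θ s * (v i - Rb (rr+1)) < 0 :=
        mul_neg_of_pos_of_neg (hθpos s) (by linarith)
      linarith
    · rw [if_neg hbud] at heq
      rw [heq] at hU
      exact absurd hU (not_le.mpr hbotlt)
  obtain ⟨hbud0, hu0, hp0le⟩ := hu_of w0 r0s h40 0 hsy0 hw0s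
  obtain ⟨hbud1, hu1, hp1le⟩ := hu_of w1 r1s h41 1 hsy1 hw1s
  obtain ⟨hbud2, hu2, hp2le⟩ := hu_of w2 r2s h42 2 hsy2 hw2s
  have huL : bcbUtil θ v B b B π L = 0 := bcbUtil_none (by rw [hsyL]) hLnone
  -- winners afford their slots at own bid
  have hub0 : b w0 ≤ B w0 / θ 0 := by
    have hss := bcbSlot_some_spec θ Rb Rg hw0s
    have h := hss.2.1
    rw [hRb r0s h40, hRg r0s h40] at h
    exact (haffd _ 0 _).mp h
  have hub1 : b w1 ≤ B w1 / θ 1 := by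
    have hss := bcbSlot_some_spec θ Rb Rg hw1s
    have h := hss.2.1
    rw [hRb r1s h41, hRg r1s h41] at h
    exact (haffd _ 1 _).mp h
  have hub2 : b w2 ≤ B w2 / θ 2 := by
    have hss := bcbSlot_some_spec θ Rb Rg hw2s
    have h := hss.2.1
    rw [hRb r2s h42, hRg r2s h42] at h
    exact (haffd _ 2 _).mp h
  -- strict division monotonicity in numerator
  have hdivlt : ∀ (j : Fin 3) {x y : ℝ}, x < y → x / θ j < y / θ j := by
    intro j x y h
    rw [div_lt_div_iff₀ (hθpos j) (hθpos j)]
    exact mul_lt_mul_of_pos_right h (hθpos j)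
  -- ######## the loser forces b w2 ≥ B L / θ 2 ########
  have hlb2 : B L / θ 2 ≤ b w2 := by
    by_contra hcl
    push_neg at hcl
    set lo : ℝ := max (max (b w0) (b w1)) (max (b w2) (B L / θ 1)) with hlodef
    have hlo0 : b w0 ≤ lo := le_max_of_le_left (le_max_left _ _)
    have hlo1 : b w1 ≤ lo := le_max_of_le_left (le_max_right _ _)
    have hlo2 : b w2 ≤ lo := le_max_of_le_right (le_max_left _ _)
    have hloT : B L / θ 1 ≤ lo := le_max_of_le_right (le_max_right _ _)
    have hlolt : lo < B L / θ 2 := by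
      rw [hlodef]
      have h01 : b w0 < B L / θ 2 := lt_of_le_of_lt hub0 (hband02 w0 L)
      have h11 : b w1 < B L / θ 2 := lt_of_le_of_lt hub1 (hband12 w1 L)
      have h21 : B L / θ 1 < B L / θ 2 := hband12 L L
      simp only [max_lt_iff]
      exact ⟨⟨h01, h11⟩, hcl, h21⟩
    set x : ℝ := (lo + B L / θ 2) / 2 with hxdef
    have hlox : lo < x := by rw [hxdef]; linarith
    have hxlt : x < B L / θ 2 := by rw [hxdef]; linarith
    have hxpos : 0 < x := lt_of_lt_of_le (hTpos L 1) (hloT.trans hlox.le)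
    have hxle : x ≤ B 0 / θ 2 := hxlt.le.trans (hdivle 2 (hBle0 L))
    apply hgrabcon rLs hL4 hLnone x hxpos hxle 0 2 ?_ ?_ ?_
    · intro r hr
      refine Or.inr ⟨by omega, ?_⟩
      rcases hpart (π r) with h | h | h | h
      · rw [h]; exact lt_of_le_of_lt hlo0 hlox
      · rw [h]; exact lt_of_le_of_lt hlo1 hlox
      · rw [h]; exact lt_of_le_of_lt hlo2 hlox
      · exfalso; apply hr
        have : r = π.symm L := by rw [← h, Equiv.symm_apply_apply]
        rw [this, hsyL]
    · exact (haffd _ 2 _).mpr hxlt.le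
    · intro s' hs' hcs
      have h1 : x ≤ B (π ⟨rLs, hL4⟩) / θ 1 := haffmono _ _ s' 1 (by omega) hcs
      have h2 : B (π ⟨rLs, hL4⟩) / θ 1 ≤ lo := hloT
      linarith
  -- consequences: w2 has the largest budget among {w2, L}, bids highest among winners
  have hBLw2 : B L ≤ B w2 := by
    have h := hlb2.trans hub2
    have h2 := (div_le_div_iff₀ (hθpos 2) (hθpos 2)).mp h
    exact le_of_mul_le_mul_right h2 (hθpos 2)
  have hw2neL : w2 ≠ L := by
    intro hc
    rw [hw2def, hLdef] at hc
    have := π.injective hc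
    have := congrArg Fin.val this
    simp at this
    omega
  have hw2ltL : w2 < L := by
    rcases lt_or_ge w2 L with h | h
    · exact h
    · rcases eq_or_lt_of_le h with h' | h'
      · exact absurd h'.symm hw2neL
      · exact absurd (hB h') (not_lt.mpr hBLw2)
  have hBLltw2 : B L < B w2 := hB hw2ltL
  have hb2lb : B 3 / θ 2 ≤ b w2 := (hdivle 2 (hBle3 L)).trans hlb2
  have hb21 : b w1 < b w2 := lt_of_le_of_lt hub1 (lt_of_lt_of_le (hband12 w1 3) ((hdivle 2 (hBle3 L)).trans hlb2))
  have hb20 : b w0 < b w2 := lt_of_le_of_lt hub0 (lt_of_lt_of_le (hband02 w0 3) ((hdivle 2 (hBle3 L)).trans hlb2))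
  have hr21 : r2s < r1s := by
    have := rank_lt_of_bid_gt hπ hb21
    rw [hsy2, hsy1] at this
    exact this
  have hr20 : r2s < r0s := by
    have := rank_lt_of_bid_gt hπ hb20
    rw [hsy2, hsy0] at this
    exact this
  -- any bid strictly below b w2 is at most the equilibrium price of w2
  have hple2 : ∀ j : Fin 4, b j < b w2 → b j ≤ Rb (r2s + 1) := by
    intro j hj
    have hrj := rank_lt_of_bid_gt hπ hj
    rw [hsy2] at hrj
    have hj4 : ((π.symm j : Fin 4) : ℕ) < 4 := (π.symm j).isLt
    have hbj : Rb ((π.symm j : Fin 4) : ℕ) = b j := by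
      rw [hRb _ hj4]
      congr 1
      rw [show (⟨((π.symm j : Fin 4) : ℕ), hj4⟩ : Fin 4) = π.symm j from Fin.ext rfl]
      exact Equiv.apply_symm_apply π j
    rw [← hbj]
    exact hRbanti (r2s + 1) _ (by omega) hj4 (by exact hrj)
  -- ######## w2 undercuts: b w1 ≥ B w2 / θ 1 ########
  have hθ12 : θ 2 < θ 1 := hθ (show (1 : Fin 3) < 2 by omega)
  have hθ01 : θ 1 < θ 0 := hθ (show (0 : Fin 3) < 1 by omega)
  have hK1 : B w2 / θ 1 ≤ b w1 := by
    by_contra hcl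
    push_neg at hcl
    set p2 : ℝ := Rb (r2s + 1) with hp2def
    set lo : ℝ := max (max (b w1) (b w0)) (max (B L / θ 1) (B w2 / θ 0)) with hlodef
    have hlo1 : b w1 ≤ lo := le_max_of_le_left (le_max_left _ _)
    have hlo0 : b w0 ≤ lo := le_max_of_le_left (le_max_right _ _)
    have hloL : B L / θ 1 ≤ lo := le_max_of_le_right (le_max_left _ _)
    have hlo2 : B w2 / θ 0 ≤ lo := le_max_of_le_right (le_max_right _ _)
    have hlolt : lo < B w2 / θ 1 := by
      rw [hlodef]
      simp only [max_lt_iff]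
      exact ⟨⟨hcl, lt_of_le_of_lt hub0 (hband01 w0 w2)⟩, hdivlt 1 hBLltw2, hband01 w2 w2⟩
    have hfinish : ∀ p : ℝ, p ≤ p2 → p < B w2 / θ 1 →
        ¬ (((θ 1 * (v w2 - p) : ℝ) : EReal) ≤ bcbUtil θ v B b B π w2) := by
      intro p hpp2 hpb hle
      rw [hu2] at hle
      have hler : θ 1 * (v w2 - p) ≤ θ 2 * (v w2 - p2) := by exact_mod_cast hle
      have hvp : 0 < v w2 - p := by linarith [hT02max w2 1, hv w2]
      have e1 : θ 2 * (v w2 - p2) ≤ θ 2 * (v w2 - p) :=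
        mul_le_mul_of_nonneg_left (by linarith) (hθpos 2).le
      have e2 : θ 2 * (v w2 - p) < θ 1 * (v w2 - p) := mul_lt_mul_of_pos_right hθ12 hvp
      linarith
    by_cases hbL : b L ≤ lo
    · -- all three others are below: w2 deviates to the top
      set x : ℝ := (lo + B w2 / θ 1) / 2 with hxdef
      have hlox : lo < x := by rw [hxdef]; linarith
      have hxlt : x < B w2 / θ 1 := by rw [hxdef]; linarith
      have hxpos : 0 < x := lt_of_lt_of_le (hTpos L 1) (hloL.trans hlox.le)
      have hxw2 : x < b w2 := by
        have h2 : B w2 / θ 1 < B 3 / θ 2 := hband12 w2 3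
        linarith [hb2lb]
      have hsplitX : ∀ r : Fin 4, r ≠ π.symm w2 →
          ((moveIdx (π.symm w2 : ℕ) (((0 : Fin 4)) : ℕ) (r : ℕ) < (((0 : Fin 4)) : ℕ) ∧
              x < b (π r) ∧ ¬ (θ 1 * b (π r) ≤ B (π r)))
            ∨ (¬ (moveIdx (π.symm w2 : ℕ) (((0 : Fin 4)) : ℕ) (r : ℕ) < (((0 : Fin 4)) : ℕ)) ∧
              b (π r) < x)) := by
        intro r hr
        refine Or.inr ⟨by omega, ?_⟩
        rcases hpart (π r) with h | h | h | h
        · rw [h]; exact lt_of_le_of_lt hlo0 hlox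
        · rw [h]; exact lt_of_le_of_lt hlo1 hlox
        · exfalso; apply hr; rw [← h, Equiv.symm_apply_apply]
        · rw [h]; exact lt_of_le_of_lt hbL hlox
      obtain ⟨π', p, hord, hple, hu⟩ := grab hθpos hπ w2 x hxpos 0 1 hsplitX
        ((haffd _ 1 _).mpr hxlt.le)
        (fun s' hs' hcs => by
          have h1 : x ≤ B w2 / θ 0 := haffmono _ _ s' 0 (by omega) hcs
          linarith)
      have hp : p ≤ p2 ∧ p < B w2 / θ 1 := by
        rcases hple with ⟨h0, hq3⟩ | ⟨j, hji, hpj, hjx⟩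
        · exact absurd hq3 (by omega)
        · have hjw2 : b j < b w2 := by linarith
          exact ⟨hpj ▸ hple2 j hjw2, by rw [hpj]; linarith⟩
      have hle := hNE w2 x π' hord
      rw [hu] at hle
      exact hfinish p hp.1 hp.2 hle
    · -- only L is above x : w2 deviates to rank 1
      push_neg at hbL
      set x : ℝ := (lo + min (b L) (B w2 / θ 1)) / 2 with hxdef
      have hminlo : lo < min (b L) (B w2 / θ 1) := lt_min hbL hlolt
      have hlox : lo < x := by rw [hxdef]; linarith
      have hxL : x < b L := by
        have := min_le_left (b L) (B w2 / θ 1); rw [hxdef]; linarith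
      have hxlt : x < B w2 / θ 1 := by
        have := min_le_right (b L) (B w2 / θ 1); rw [hxdef]; linarith
      have hxpos : 0 < x := lt_of_lt_of_le (hTpos L 1) (hloL.trans hlox.le)
      have hxw2 : x < b w2 := by
        have h2 : B w2 / θ 1 < B 3 / θ 2 := hband12 w2 3
        linarith [hb2lb]
      have hrL1 : rLs < r1s := by
        have := rank_lt_of_bid_gt hπ (lt_of_le_of_lt hlo1 (hlox.trans hxL))
        rw [hsyL, hsy1] at this; exact this
      have hrL0 : rLs < r0s := by
        have := rank_lt_of_bid_gt hπ (lt_of_le_of_lt hlo0 (hlox.trans hxL))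
        rw [hsyL, hsy0] at this; exact this
      have hrLne2 : rLs ≠ r2s := hLne2
      have hsplitX : ∀ r : Fin 4, r ≠ π.symm w2 →
          ((moveIdx (π.symm w2 : ℕ) (((1 : Fin 4)) : ℕ) (r : ℕ) < (((1 : Fin 4)) : ℕ) ∧
              x < b (π r) ∧ ¬ (θ 1 * b (π r) ≤ B (π r)))
            ∨ (¬ (moveIdx (π.symm w2 : ℕ) (((1 : Fin 4)) : ℕ) (r : ℕ) < (((1 : Fin 4)) : ℕ)) ∧
              b (π r) < x)) := by
        intro r hr
        rw [hsv2]
        rcases hpart (π r) with h | h | h | h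
        · have hreq : (r : ℕ) = r0s := by
            have h' : r = π.symm w0 := by rw [← h, Equiv.symm_apply_apply]
            rw [h', hsy0]
          refine Or.inr ⟨?_, by rw [h]; exact lt_of_le_of_lt hlo0 hlox⟩
          unfold moveIdx; split_ifs <;> omega
        · have hreq : (r : ℕ) = r1s := by
            have h' : r = π.symm w1 := by rw [← h, Equiv.symm_apply_apply]
            rw [h', hsy1]
          refine Or.inr ⟨?_, by rw [h]; exact lt_of_le_of_lt hlo1 hlox⟩
          unfold moveIdx; split_ifs <;> omega
        · exfalso; apply hr
          rw [← h, Equiv.symm_apply_apply]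
        · have hreq : (r : ℕ) = rLs := by
            have h' : r = π.symm L := by rw [← h, Equiv.symm_apply_apply]
            rw [h', hsyL]
          refine Or.inl ⟨?_, by rw [h]; exact hxL, ?_⟩
          · unfold moveIdx; split_ifs <;> omega
          · rw [h]
            intro hcs
            have := (haffd L 1 (b L)).mp hcs
            linarith
      obtain ⟨π', p, hord, hple, hu⟩ := grab hθpos hπ w2 x hxpos 1 1 hsplitX
        ((haffd _ 1 _).mpr hxlt.le)
        (fun s' hs' hcs => by
          have h1 : x ≤ B w2 / θ 0 := haffmono _ _ s' 0 (by omega) hcs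
          linarith)
      have hp : p ≤ p2 ∧ p < B w2 / θ 1 := by
        rcases hple with ⟨h0, hq3⟩ | ⟨j, hji, hpj, hjx⟩
        · exact absurd hq3 (by omega)
        · have hjw2 : b j < b w2 := by linarith
          exact ⟨hpj ▸ hple2 j hjw2, by rw [hpj]; linarith⟩
      have hle := hNE w2 x π' hord
      rw [hu] at hle
      exact hfinish p hp.1 hp.2 hle
  -- consequences of hK1
  have hBw2w1 : B w2 ≤ B w1 := by
    have h := hK1.trans hub1
    have h2 := (div_le_div_iff₀ (hθpos 1) (hθpos 1)).mp h
    exact le_of_mul_le_mul_right h2 (hθpos 1)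
  have hw1new2 : w1 ≠ w2 := by
    intro hc
    rw [hw1def, hw2def] at hc
    have := congrArg Fin.val (π.injective hc)
    simp at this
    omega
  have hw1ltw2 : w1 < w2 := by
    rcases lt_or_ge w1 w2 with h | h
    · exact h
    · rcases eq_or_lt_of_le h with h' | h'
      · exact absurd h'.symm hw1new2
      · exact absurd (hB h') (not_lt.mpr hBw2w1)
  have hb10 : b w0 < b w1 :=
    lt_of_le_of_lt hub0 (lt_of_lt_of_le (hband01 w0 w2) hK1)
  have hr10 : r1s < r0s := by
    have := rank_lt_of_bid_gt hπ hb10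
    rw [hsy1, hsy0] at this
    exact this
  have hple1 : ∀ j : Fin 4, b j < b w1 → b j ≤ Rb (r1s + 1) := by
    intro j hj
    have hrj := rank_lt_of_bid_gt hπ hj
    rw [hsy1] at hrj
    have hj4 : ((π.symm j : Fin 4) : ℕ) < 4 := (π.symm j).isLt
    have hbj : Rb ((π.symm j : Fin 4) : ℕ) = b j := by
      rw [hRb _ hj4]
      congr 1
      rw [show (⟨((π.symm j : Fin 4) : ℕ), hj4⟩ : Fin 4) = π.symm j from Fin.ext rfl]
      exact Equiv.apply_symm_apply π j
    rw [← hbj]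
    exact hRbanti (r1s + 1) _ (by omega) hj4 (by exact hrj)
  -- ######## w1 undercuts: b w0 ≥ B w1 / θ 0 ########
  have hK0 : B w1 / θ 0 ≤ b w0 := by
    by_contra hcl
    push_neg at hcl
    set p1 : ℝ := Rb (r1s + 1) with hp1def
    set lo : ℝ := max (b w0) 0 with hlodef
    have hlo0 : b w0 ≤ lo := le_max_left _ _
    have hlo00 : (0 : ℝ) ≤ lo := le_max_right _ _
    have hlolt : lo < B w1 / θ 0 := by
      rw [hlodef]
      simp only [max_lt_iff]
      exact ⟨hcl, hTpos w1 0⟩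
    have hfinish : ∀ p : ℝ, p ≤ p1 → p < B w1 / θ 0 →
        ¬ (((θ 0 * (v w1 - p) : ℝ) : EReal) ≤ bcbUtil θ v B b B π w1) := by
      intro p hpp1 hpb hle
      rw [hu1] at hle
      have hler : θ 0 * (v w1 - p) ≤ θ 1 * (v w1 - p1) := by exact_mod_cast hle
      have hvp : 0 < v w1 - p := by linarith [hT02max w1 0, hv w1]
      have e1 : θ 1 * (v w1 - p1) ≤ θ 1 * (v w1 - p) :=
        mul_le_mul_of_nonneg_left (by linarith) (hθpos 1).le
      have e2 : θ 1 * (v w1 - p) < θ 0 * (v w1 - p) := mul_lt_mul_of_pos_right hθ01 hvp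
      linarith
    have hw2notaff0 : ¬ (θ 0 * b w2 ≤ B w2) := by
      intro hcs
      have h1 := (haffd w2 0 (b w2)).mp hcs
      have h2 : B w2 / θ 0 < B 3 / θ 2 := hband02 w2 3
      linarith [hb2lb]
    by_cases hbL : b L ≤ lo
    · -- only w2 above x : w1 deviates to rank 1
      set x : ℝ := (lo + B w1 / θ 0) / 2 with hxdef
      have hlox : lo < x := by rw [hxdef]; linarith
      have hxlt : x < B w1 / θ 0 := by rw [hxdef]; linarith
      have hxpos : 0 < x := lt_of_le_of_lt hlo00 hlox
      have hxw1 : x < b w1 := lt_of_lt_of_le (hxlt.trans (lt_of_lt_of_le (hband01 w1 w2) hK1)) le_rfl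
      have hxw2 : x < b w2 := by
        have h2 : B w1 / θ 0 < B 3 / θ 2 := hband02 w1 3
        linarith [hb2lb]
      have hrL1' : r1s < rLs := by
        have := rank_lt_of_bid_gt hπ (lt_of_le_of_lt hbL (hlox.trans hxw1))
        rw [hsy1, hsyL] at this; exact this
      have hrL2' : r2s < rLs := by omega
      have hsplitX : ∀ r : Fin 4, r ≠ π.symm w1 →
          ((moveIdx (π.symm w1 : ℕ) (((1 : Fin 4)) : ℕ) (r : ℕ) < (((1 : Fin 4)) : ℕ) ∧
              x < b (π r) ∧ ¬ (θ 0 * b (π r) ≤ B (π r)))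
            ∨ (¬ (moveIdx (π.symm w1 : ℕ) (((1 : Fin 4)) : ℕ) (r : ℕ) < (((1 : Fin 4)) : ℕ)) ∧
              b (π r) < x)) := by
        intro r hr
        rw [hsv1]
        rcases hpart (π r) with h | h | h | h
        · have hreq : (r : ℕ) = r0s := by
            have h' : r = π.symm w0 := by rw [← h, Equiv.symm_apply_apply]
            rw [h', hsy0]
          refine Or.inr ⟨?_, by rw [h]; exact lt_of_le_of_lt hlo0 hlox⟩
          unfold moveIdx; split_ifs <;> omega
        · exfalso; apply hr
          rw [← h, Equiv.symm_apply_apply]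
        · have hreq : (r : ℕ) = r2s := by
            have h' : r = π.symm w2 := by rw [← h, Equiv.symm_apply_apply]
            rw [h', hsy2]
          refine Or.inl ⟨?_, by rw [h]; exact hxw2, by rw [h]; exact hw2notaff0⟩
          unfold moveIdx; split_ifs <;> omega
        · have hreq : (r : ℕ) = rLs := by
            have h' : r = π.symm L := by rw [← h, Equiv.symm_apply_apply]
            rw [h', hsyL]
          refine Or.inr ⟨?_, by rw [h]; exact lt_of_le_of_lt hbL hlox⟩
          unfold moveIdx; split_ifs <;> omega
      obtain ⟨π', p, hord, hple, hu⟩ := grab hθpos hπ w1 x hxpos 1 0 hsplitX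
        ((haffd _ 0 _).mpr hxlt.le)
        (fun s' hs' => absurd hs' (by omega))
      have hp : p ≤ p1 ∧ p < B w1 / θ 0 := by
        rcases hple with ⟨h0, hq3⟩ | ⟨j, hji, hpj, hjx⟩
        · exact absurd hq3 (by omega)
        · have hjw1 : b j < b w1 := by linarith
          exact ⟨hpj ▸ hple1 j hjw1, by rw [hpj]; linarith⟩
      have hle := hNE w1 x π' hord
      rw [hu] at hle
      exact hfinish p hp.1 hp.2 hle
    · -- w2 and L above x : w1 deviates to rank 2
      push_neg at hbL
      set x : ℝ := (lo + min (b L) (B w1 / θ 0)) / 2 with hxdef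
      have hminlo : lo < min (b L) (B w1 / θ 0) := lt_min hbL hlolt
      have hlox : lo < x := by rw [hxdef]; linarith
      have hxL : x < b L := by
        have := min_le_left (b L) (B w1 / θ 0); rw [hxdef]; linarith
      have hxlt : x < B w1 / θ 0 := by
        have := min_le_right (b L) (B w1 / θ 0); rw [hxdef]; linarith
      have hxpos : 0 < x := lt_of_le_of_lt hlo00 hlox
      have hxw1 : x < b w1 := hxlt.trans (lt_of_lt_of_le (hband01 w1 w2) hK1)
      have hxw2 : x < b w2 := by
        have h2 : B w1 / θ 0 < B 3 / θ 2 := hband02 w1 3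
        linarith [hb2lb]
      have hw0L : b w0 < b L := lt_of_le_of_lt hlo0 (hlox.trans hxL)
      have hrL0' : rLs < r0s := by
        have := rank_lt_of_bid_gt hπ hw0L
        rw [hsyL, hsy0] at this; exact this
      have hLnotaff0 : ¬ (θ 0 * b L ≤ B L) := by
        intro hcs
        have h0r0 : (0 : Fin 3) ∈ bcbAvail θ Rb Rg r0s := (bcbSlot_some_spec θ Rb Rg hw0s).1
        have h0avail : (0 : Fin 3) ∈ bcbAvail θ Rb Rg rLs :=
          bcbAvail_subset_of_le θ Rb Rg (by omega) h0r0
        have hnoaff := (bcbSlot_none_spec θ Rb Rg hLnone).1 0 h0avail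
        apply hnoaff
        rw [hRb rLs hL4, hRg rLs hL4]
        exact hcs
      have hsplitX : ∀ r : Fin 4, r ≠ π.symm w1 →
          ((moveIdx (π.symm w1 : ℕ) (((2 : Fin 4)) : ℕ) (r : ℕ) < (((2 : Fin 4)) : ℕ) ∧
              x < b (π r) ∧ ¬ (θ 0 * b (π r) ≤ B (π r)))
            ∨ (¬ (moveIdx (π.symm w1 : ℕ) (((2 : Fin 4)) : ℕ) (r : ℕ) < (((2 : Fin 4)) : ℕ)) ∧
              b (π r) < x)) := by
        intro r hr
        rw [hsv1]
        rcases hpart (π r) with h | h | h | h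
        · have hreq : (r : ℕ) = r0s := by
            have h' : r = π.symm w0 := by rw [← h, Equiv.symm_apply_apply]
            rw [h', hsy0]
          refine Or.inr ⟨?_, by rw [h]; exact lt_of_le_of_lt hlo0 hlox⟩
          unfold moveIdx; split_ifs <;> omega
        · exfalso; apply hr
          rw [← h, Equiv.symm_apply_apply]
        · have hreq : (r : ℕ) = r2s := by
            have h' : r = π.symm w2 := by rw [← h, Equiv.symm_apply_apply]
            rw [h', hsy2]
          refine Or.inl ⟨?_, by rw [h]; exact hxw2, by rw [h]; exact hw2notaff0⟩
          unfold moveIdx; split_ifs <;> omega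
        · have hreq : (r : ℕ) = rLs := by
            have h' : r = π.symm L := by rw [← h, Equiv.symm_apply_apply]
            rw [h', hsyL]
          refine Or.inl ⟨?_, by rw [h]; exact hxL, by rw [h]; exact hLnotaff0⟩
          unfold moveIdx; split_ifs <;> omega
      obtain ⟨π', p, hord, hple, hu⟩ := grab hθpos hπ w1 x hxpos 2 0 hsplitX
        ((haffd _ 0 _).mpr hxlt.le)
        (fun s' hs' => absurd hs' (by omega))
      have hp : p ≤ p1 ∧ p < B w1 / θ 0 := by
        rcases hple with ⟨h0, hq3⟩ | ⟨j, hji, hpj, hjx⟩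
        · exact absurd hq3 (by omega)
        · have hjw1 : b j < b w1 := by linarith
          exact ⟨hpj ▸ hple1 j hjw1, by rw [hpj]; linarith⟩
      have hle := hNE w1 x π' hord
      rw [hu] at hle
      exact hfinish p hp.1 hp.2 hle
  -- consequences of hK0 : identify the players
  have hBw1w0 : B w1 ≤ B w0 := by
    have h := hK0.trans hub0
    have h2 := (div_le_div_iff₀ (hθpos 0) (hθpos 0)).mp h
    exact le_of_mul_le_mul_right h2 (hθpos 0)
  have hw0new1 : w0 ≠ w1 := by
    intro hc
    rw [hw0def, hw1def] at hc
    have := congrArg Fin.val (π.injective hc)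
    simp at this
    omega
  have hw0ltw1 : w0 < w1 := by
    rcases lt_or_ge w0 w1 with h | h
    · exact h
    · rcases eq_or_lt_of_le h with h' | h'
      · exact absurd h'.symm hw0new1
      · exact absurd (hB h') (not_lt.mpr hBw1w0)
  have hidw0 : w0 = 0 := by omega
  have hidw1 : w1 = 1 := by omega
  have hidw2 : w2 = 2 := by omega
  have hidL : L = 3 := by omega
  -- ######## conclusion ########
  intro m
  obtain ⟨mv, hmv⟩ := m
  interval_cases mv
  · have hcast : ((⟨0, hmv⟩ : Fin 3).castSucc) = w0 := by rw [hidw0]; exact Fin.ext rfl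
    have hsucc : ((⟨0, hmv⟩ : Fin 3).succ) = w1 := by rw [hidw1]; exact Fin.ext rfl
    have hmm : (⟨0, hmv⟩ : Fin 3) = (0 : Fin 3) := Fin.ext rfl
    refine ⟨?_, ?_, ?_⟩
    · rw [hcast, hsy0]; exact hw0s
    · rw [hcast, hsucc, hmm]; exact hK0
    · rw [hcast, hmm]; exact hub0
  · have hcast : ((⟨1, hmv⟩ : Fin 3).castSucc) = w1 := by rw [hidw1]; exact Fin.ext rfl
    have hsucc : ((⟨1, hmv⟩ : Fin 3).succ) = w2 := by rw [hidw2]; exact Fin.ext rfl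
    have hmm : (⟨1, hmv⟩ : Fin 3) = (1 : Fin 3) := Fin.ext rfl
    refine ⟨?_, ?_, ?_⟩
    · rw [hcast, hsy1]; exact hw1s
    · rw [hcast, hsucc, hmm]; exact hK1
    · rw [hcast, hmm]; exact hub1
  · have hcast : ((⟨2, hmv⟩ : Fin 3).castSucc) = w2 := by rw [hidw2]; exact Fin.ext rfl
    have hsucc : ((⟨2, hmv⟩ : Fin 3).succ) = L := by rw [hidL]; exact Fin.ext rfl
    have hmm : (⟨2, hmv⟩ : Fin 3) = (2 : Fin 3) := Fin.ext rfl
    refine ⟨?_, ?_, ?_⟩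
    · rw [hcast, hsy2]; exact hw2s
    · rw [hcast, hsucc, hmm]; exact hlb2
    · rw [hcast, hmm]; exact hub2
end
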